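/- arXiv:1902.02854 — 13 statements merged into one kernel-verified Lean document; each statement's English description precedes it below -/
import Mathlib

section
/- Let m be a natural number, 0 < Y_1 < ... < Y_m positive reals, c_1, ..., c_m real numbers, and let G1 : (0,∞) → ℝ be twice continuously differentiable. Define G(S) = G1(S) + Σ_{i=1}^m c_i·(Y_i − S)_+ for S > 0. Assume lim_{K→∞} G1(K) = 0, lim_{K→∞} K·G1'(K) = 0, and that for every S > 0 the function K ↦ (K − S)_+ · G1''(K) is Lebesgue integrable on (0,∞). Then for every S > 0: G(S) = Σ_{i=1}^m c_i·(Y_i − S)_+ + ∫_0^∞ (K − S)_+ · G1''(K) dK. (Theorem 2.1, put-like case: a payoff vanishing at infinity, whose second derivative measure is a finite atomic part plus an absolutely continuous part, is the superposition of put payoffs (K − S)_+ with respect to the measure dG'.) -/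
/-!
`(K - S) * G1'(K) - G1(K)` is an antiderivative of `(K - S) * G1''(K)` that vanishes at infinity,
because `G1` and `K * G1'` (hence `G1'`) do. So `∫_S^∞ (K - S) G1''(K) dK = G1(S)`, while on
`(0, S]` the put payoff `(K - S)_+` vanishes.
-/

open MeasureTheory Filter Set Topology

lemma tendsto_zero_of_tendsto_id_mul {f : ℝ → ℝ}
    (hf : Tendsto (fun x => x * f x) atTop (𝓝 0)) : Tendsto f atTop (𝓝 0) := by
  have h := hf.mul tendsto_inv_atTop_zero
  rw [zero_mul] at h
  refine h.congr' ?_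
  filter_upwards [eventually_gt_atTop 0] with x hx
  field_simp

lemma max_sub_zero_mul_eq_indicator (S : ℝ) (h : ℝ → ℝ) :
    (fun K => max (K - S) 0 * h K) = (Ioi S).indicator (fun K => (K - S) * h K) := by
  ext K
  by_cases hK : S < K
  · simp [hK, hK.le]
  · simp [hK, not_lt.mp hK]

lemma setIntegral_Ioi_max_sub_zero_mul {a S : ℝ} (haS : a ≤ S) (h : ℝ → ℝ) :
    ∫ K in Ioi a, max (K - S) 0 * h K = ∫ K in Ioi S, (K - S) * h K := by
  rw [max_sub_zero_mul_eq_indicator, setIntegral_indicator measurableSet_Ioi, Ioi_inter_Ioi,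
    max_eq_right haS]

lemma integrableOn_Ioi_sub_mul_of_max_sub_zero_mul {a S : ℝ} (haS : a ≤ S) {h : ℝ → ℝ}
    (hint : IntegrableOn (fun K => max (K - S) 0 * h K) (Ioi a)) :
    IntegrableOn (fun K => (K - S) * h K) (Ioi S) := by
  refine (hint.mono_set (Ioi_subset_Ioi haS)).congr_fun (fun K hK => ?_) measurableSet_Ioi
  simp only [max_eq_left (sub_nonneg.mpr (le_of_lt (mem_Ioi.mp hK)))]

theorem integral_Ioi_sub_mul_deriv_deriv {g g' g'' : ℝ → ℝ} {S : ℝ}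
    (hd1 : ∀ K ∈ Ici S, HasDerivAt g (g' K) K) (hd2 : ∀ K ∈ Ici S, HasDerivAt g' (g'' K) K)
    (hint : IntegrableOn (fun K => (K - S) * g'' K) (Ioi S))
    (hlim : Tendsto g atTop (𝓝 0)) (hlim' : Tendsto (fun K => K * g' K) atTop (𝓝 0)) :
    ∫ K in Ioi S, (K - S) * g'' K = g S := by
  have hderiv : ∀ K ∈ Ici S,
      HasDerivAt (fun K => (K - S) * g' K - g K) ((K - S) * g'' K) K := by
    intro K hK
    refine ((((hasDerivAt_id' K).sub_const S).mul (hd2 K hK)).sub (hd1 K hK)).congr_deriv ?_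
    ring
  have hvanish : Tendsto (fun K => (K - S) * g' K - g K) atTop (𝓝 0) := by
    have h := (hlim'.sub ((tendsto_zero_of_tendsto_id_mul hlim').const_mul S)).sub hlim
    simp only [mul_zero, sub_zero] at h
    exact h.congr fun K => by ring
  rw [integral_Ioi_of_hasDerivAt_of_tendsto' hderiv hint hvanish]
  simp

theorem stmt_0_general (m : ℕ) (Y c : Fin m → ℝ)
    (G1 G1' G1'' : ℝ → ℝ)
    (hd1 : ∀ S ∈ Ioi (0:ℝ), HasDerivAt G1 (G1' S) S)
    (hd2 : ∀ S ∈ Ioi (0:ℝ), HasDerivAt G1' (G1'' S) S)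
    (hlim : Tendsto G1 atTop (nhds 0))
    (hlim' : Tendsto (fun K => K * G1' K) atTop (nhds 0))
    (hint : ∀ S ∈ Ioi (0:ℝ),
      IntegrableOn (fun K => max (K - S) 0 * G1'' K) (Ioi 0))
    (G : ℝ → ℝ)
    (hG : ∀ S ∈ Ioi (0:ℝ), G S = G1 S + ∑ i, c i * max (Y i - S) 0) :
    ∀ S ∈ Ioi (0:ℝ),
      G S = (∑ i, c i * max (Y i - S) 0)
        + ∫ K in Ioi (0:ℝ), max (K - S) 0 * G1'' K := by
  intro S hS
  have hIci : Ici S ⊆ Ioi 0 := Ici_subset_Ioi.mpr hS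
  rw [hG S hS, setIntegral_Ioi_max_sub_zero_mul hS.le,
    integral_Ioi_sub_mul_deriv_deriv (fun K hK => hd1 K (hIci hK)) (fun K hK => hd2 K (hIci hK))
      (integrableOn_Ioi_sub_mul_of_max_sub_zero_mul hS.le (hint S hS)) hlim hlim', add_comm]

/-- Theorem 2.1 (put-like case): a payoff vanishing at infinity, whose second derivative
measure is a finite atomic part plus an absolutely continuous part, is the superposition
of put payoffs `(K - S)_+` with respect to the measure `dG'`. -/
theorem stmt_0 (m : ℕ) (Y c : Fin m → ℝ)
    (hYpos : ∀ i, 0 < Y i) (hYmono : StrictMono Y)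
    (G1 G1' G1'' : ℝ → ℝ)
    (hd1 : ∀ S ∈ Ioi (0:ℝ), HasDerivAt G1 (G1' S) S)
    (hd2 : ∀ S ∈ Ioi (0:ℝ), HasDerivAt G1' (G1'' S) S)
    (hcont : ContinuousOn G1'' (Ioi 0))
    (hlim : Tendsto G1 atTop (nhds 0))
    (hlim' : Tendsto (fun K => K * G1' K) atTop (nhds 0))
    (hint : ∀ S ∈ Ioi (0:ℝ),
      IntegrableOn (fun K => max (K - S) 0 * G1'' K) (Ioi 0))
    (G : ℝ → ℝ)
    (hG : ∀ S ∈ Ioi (0:ℝ), G S = G1 S + ∑ i, c i * max (Y i - S) 0) :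
    ∀ S ∈ Ioi (0:ℝ),
      G S = (∑ i, c i * max (Y i - S) 0)
        + ∫ K in Ioi (0:ℝ), max (K - S) 0 * G1'' K :=
  stmt_0_general m Y c G1 G1' G1'' hd1 hd2 hlim hlim' hint G hG
end

section
/- Let m be a natural number, 0 < Y_1 < ... < Y_m positive reals, c_1, ..., c_m real numbers, and let G1 : (0,∞) → ℝ be twice continuously differentiable. Define G(S) = G1(S) + Σ_{i=1}^m c_i·(S − Y_i)_+ for S > 0. Assume lim_{K→0+} G1(K) = 0, lim_{K→0+} G1'(K) = 0, and that for every S > 0 the function K ↦ (S − K)_+ · G1''(K) is Lebesgue integrable on (0,∞). Then for every S > 0: G(S) = Σ_{i=1}^m c_i·(S − Y_i)_+ + ∫_0^∞ (S − K)_+ · G1''(K) dK. (Theorem 2.1, call-like case: a payoff vanishing at the origin is the superposition of call payoffs (S − K)_+ with respect to the measure dG'.) -/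
open MeasureTheory Filter Set

/-- Theorem 2.1 (call-like case): a payoff vanishing at the origin is the superposition of
call payoffs `(S - K)_+` with respect to the measure `dG'`. -/
theorem stmt_1 (m : ℕ) (Y c : Fin m → ℝ)
    (hYpos : ∀ i, 0 < Y i) (hYmono : StrictMono Y)
    (G1 G1' G1'' : ℝ → ℝ)
    (hd1 : ∀ S ∈ Ioi (0:ℝ), HasDerivAt G1 (G1' S) S)
    (hd2 : ∀ S ∈ Ioi (0:ℝ), HasDerivAt G1' (G1'' S) S)
    (hcont : ContinuousOn G1'' (Ioi 0))
    (hlim : Tendsto G1 (nhdsWithin 0 (Ioi 0)) (nhds 0))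
    (hlim' : Tendsto G1' (nhdsWithin 0 (Ioi 0)) (nhds 0))
    (hint : ∀ S ∈ Ioi (0:ℝ),
      IntegrableOn (fun K => max (S - K) 0 * G1'' K) (Ioi 0))
    (G : ℝ → ℝ)
    (hG : ∀ S ∈ Ioi (0:ℝ), G S = G1 S + ∑ i, c i * max (S - Y i) 0) :
    ∀ S ∈ Ioi (0:ℝ),
      G S = (∑ i, c i * max (S - Y i) 0)
        + ∫ K in Ioi (0:ℝ), max (S - K) 0 * G1'' K := by
  intro S hS
  have hS0 : (0:ℝ) < S := hS
  set f : ℝ → ℝ := fun K => (S - K) * G1'' K with hf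
  have hint0 := hint S hS
  have hfint : IntegrableOn f (Ioc 0 S) := by
    have h1 : IntegrableOn (fun K => max (S - K) 0 * G1'' K) (Ioc 0 S) :=
      hint0.mono_set Ioc_subset_Ioi_self
    refine (integrableOn_congr_fun (fun K hK => ?_) measurableSet_Ioc).mpr h1
    simp [hf, max_eq_left (sub_nonneg.2 hK.2)]
  have hzero : ∫ K in Ioi S, max (S - K) 0 * G1'' K = 0 := by
    rw [setIntegral_congr_fun measurableSet_Ioi (g := fun _ => (0:ℝ))
      (fun K hK => by simp [max_eq_right (by linarith [mem_Ioi.1 hK] : S - K ≤ 0)])]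
    simp
  have hunion : Ioc (0:ℝ) S ∪ Ioi S = Ioi 0 := Ioc_union_Ioi_eq_Ioi hS0.le
  have hsplit : ∫ K in Ioi (0:ℝ), max (S - K) 0 * G1'' K = ∫ K in Ioc 0 S, f K := by
    rw [← hunion, setIntegral_union (Ioc_disjoint_Ioi le_rfl) measurableSet_Ioi
      (hint0.mono_set (hunion ▸ subset_union_left))
      (hint0.mono_set (hunion ▸ subset_union_right)), hzero, add_zero]
    exact setIntegral_congr_fun measurableSet_Ioc fun K hK => by
      simp [hf, max_eq_left (sub_nonneg.2 hK.2)]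
  -- integration by parts for a ∈ (0, S)
  have key : ∀ a ∈ Ioo (0:ℝ) S,
      ∫ K in a..S, f K = G1 S - G1 a - (S - a) * G1' a := by
    intro a ha
    have hsub : uIcc a S ⊆ Ioi (0:ℝ) := by
      rw [uIcc_of_le ha.2.le]
      exact fun x hx => lt_of_lt_of_le ha.1 hx.1
    have hu : ∀ x ∈ uIcc a S, HasDerivAt (fun x => S - x) (-1) x := fun x _ => by
      simpa using (hasDerivAt_id x).const_sub S
    have hv : ∀ x ∈ uIcc a S, HasDerivAt G1' (G1'' x) x := fun x hx => hd2 x (hsub hx)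
    have hu' : IntervalIntegrable (fun _ : ℝ => (-1:ℝ)) volume a S := intervalIntegrable_const
    have hv' : IntervalIntegrable G1'' volume a S :=
      ContinuousOn.intervalIntegrable (hcont.mono hsub)
    have hparts := intervalIntegral.integral_mul_deriv_eq_deriv_mul hu hv hu' hv'
    have hG1'cont : ContinuousOn G1' (uIcc a S) := fun x hx =>
      ((hd2 x (hsub hx)).continuousAt).continuousWithinAt
    have hftc : ∫ x in a..S, G1' x = G1 S - G1 a :=
      intervalIntegral.integral_eq_sub_of_hasDerivAt (fun x hx => hd1 x (hsub hx))
        hG1'cont.intervalIntegrable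
    have hneg : ∫ x in a..S, (-1:ℝ) * G1' x = -(G1 S - G1 a) := by
      simp only [neg_one_mul]
      rw [intervalIntegral.integral_neg, hftc]
    rw [hf]
    rw [hparts, hneg]
    ring
  set I := ∫ K in Ioc (0:ℝ) S, f K with hI
  have hicc : IntegrableOn f (Icc 0 S) := by
    rwa [integrableOn_Icc_iff_integrableOn_Ioc]
  have hprim : ContinuousOn (fun x => ∫ t in Ioc 0 x, f t) (Icc 0 S) :=
    intervalIntegral.continuousOn_primitive hicc
  have h0 : Tendsto (fun a => ∫ t in Ioc 0 a, f t) (nhdsWithin 0 (Ioi 0)) (nhds 0) := by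
    have h00 : (∫ t in Ioc (0:ℝ) 0, f t) = 0 := by simp
    have ht : Tendsto (fun a => ∫ t in Ioc 0 a, f t) (nhdsWithin 0 (Icc 0 S)) (nhds 0) := by
      have := hprim 0 (left_mem_Icc.2 hS0.le)
      simpa [ContinuousWithinAt, h00] using this
    refine ht.mono_left ?_
    rw [← nhdsWithin_Ioo_eq_nhdsGT hS0]
    exact nhdsWithin_mono _ Ioo_subset_Icc_self
  have hPhi : Tendsto (fun a => ∫ K in a..S, f K) (nhdsWithin 0 (Ioi 0)) (nhds I) := by
    have hev : ∀ᶠ a in nhdsWithin 0 (Ioi 0),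
        I - (∫ t in Ioc 0 a, f t) = ∫ K in a..S, f K := by
      filter_upwards [Ioo_mem_nhdsGT hS0] with a ha
      rw [intervalIntegral.integral_of_le ha.2.le]
      have hsum : I = (∫ t in Ioc 0 a, f t) + ∫ t in Ioc a S, f t := by
        rw [hI, ← Ioc_union_Ioc_eq_Ioc ha.1.le ha.2.le,
          setIntegral_union (Ioc_disjoint_Ioc_of_le le_rfl) measurableSet_Ioc
            (hfint.mono_set (Ioc_subset_Ioc_right ha.2.le))
            (hfint.mono_set (Ioc_subset_Ioc_left ha.1.le))]
      linarith
    exact Tendsto.congr' hev (by simpa using tendsto_const_nhds.sub h0)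
  have hRHS : Tendsto (fun a => G1 S - G1 a - (S - a) * G1' a) (nhdsWithin 0 (Ioi 0))
      (nhds (G1 S)) := by
    have hid : Tendsto (fun a : ℝ => a) (nhdsWithin 0 (Ioi 0)) (nhds 0) :=
      tendsto_id.mono_left nhdsWithin_le_nhds
    have h1 : Tendsto (fun a => (S - a) * G1' a) (nhdsWithin 0 (Ioi 0)) (nhds 0) := by
      have hsa : Tendsto (fun a : ℝ => S - a) (nhdsWithin 0 (Ioi 0)) (nhds (S - 0)) :=
        tendsto_const_nhds.sub hid
      simpa using hsa.mul hlim'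
    simpa using (tendsto_const_nhds.sub hlim).sub h1
  have hPhi' : Tendsto (fun a => ∫ K in a..S, f K) (nhdsWithin 0 (Ioi 0)) (nhds (G1 S)) := by
    refine hRHS.congr' ?_
    filter_upwards [Ioo_mem_nhdsGT hS0] with a ha
    exact (key a ha).symm
  have hIG : I = G1 S := tendsto_nhds_unique hPhi hPhi'
  rw [hG S hS, hsplit, hIG]
  ring
end

section
/- For every real β > 0, every K_0 > 0 and every S > 0, setting S_0 := K_0^{1/β}: (S^β − K_0)_+ = β·S_0^{β−1}·(S − S_0)_+ + β(β−1)·∫_{S_0}^∞ K^{β−2}·(S − K)_+ dK, where the integral converges absolutely. (Example: exact static replication of the power-call payoff (S^β − K_0)_+, with one call at the kink S_0 carrying weight equal to the jump β·S_0^{β−1} of the derivative, plus a continuum of calls with density β(β−1)K^{β−2}.) -/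
open MeasureTheory Set
open scoped Interval

/-- Exact static replication of the power-call payoff `(S^β - K₀)_+`, with one call at the kink
`S₀ = K₀^(1/β)` carrying weight equal to the jump `β·S₀^(β-1)` of the derivative, plus a
continuum of calls with density `β(β-1)K^(β-2)`. -/
theorem stmt_5 :
    ∀ β K₀ S : ℝ, 0 < β → 0 < K₀ → 0 < S →
      IntegrableOn (fun K => K ^ (β - 2) * max (S - K) 0) (Ioi (K₀ ^ (1 / β))) ∧
      max (S ^ β - K₀) 0
        = β * (K₀ ^ (1 / β)) ^ (β - 1) * max (S - K₀ ^ (1 / β)) 0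
          + β * (β - 1) * ∫ K in Ioi (K₀ ^ (1 / β)), K ^ (β - 2) * max (S - K) 0 := by
  intro β K₀ S hβ hK₀ hS
  set A := K₀ ^ (1 / β) with hA
  have hA0 : 0 < A := Real.rpow_pos_of_pos hK₀ _
  have hAβ : A ^ β = K₀ := by
    rw [hA, ← Real.rpow_mul hK₀.le, one_div_mul_cancel hβ.ne', Real.rpow_one]
  -- integrability
  set f : ℝ → ℝ := fun K => K ^ (β - 2) * max (S - K) 0 with hf
  set T := max S A with hT
  have hAT : A ≤ T := le_max_right _ _
  have hcont : ContinuousOn f (Icc A T) := by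
    apply ContinuousOn.mul
    · intro x hx
      exact (Real.continuousAt_rpow_const x _
        (Or.inl (ne_of_gt (lt_of_lt_of_le hA0 hx.1)))).continuousWithinAt
    · exact ((continuous_const.sub continuous_id).max continuous_const).continuousOn
  have hzero : ∀ x ∈ Ioi T, f x = 0 := by
    intro x hx
    have : S - x ≤ 0 := by
      have : S ≤ T := le_max_left _ _
      simp only [Ioi, mem_setOf_eq] at hx; linarith
    simp [hf, max_eq_right this]
  have hint : IntegrableOn f (Ioi A) := by
    have h1 : IntegrableOn f (Ioc A T) :=
      (hcont.integrableOn_Icc).mono_set Ioc_subset_Icc_self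
    have h2 : IntegrableOn f (Ioi T) :=
      (integrableOn_zero).congr_fun (fun x hx => (hzero x hx).symm) measurableSet_Ioi
    have := h1.union h2
    rwa [Ioc_union_Ioi_eq_Ioi hAT] at this
  refine ⟨hint, ?_⟩
  rcases le_or_gt S A with hSA | hSA
  · -- S ≤ A : everything is zero
    have hmax1 : max (S - A) 0 = 0 := max_eq_right (by linarith)
    have hmaxL : max (S ^ β - K₀) 0 = 0 := by
      have : S ^ β ≤ A ^ β := Real.rpow_le_rpow hS.le hSA hβ.le
      rw [hAβ] at this
      exact max_eq_right (by linarith)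
    have hI : (∫ K in Ioi A, f K) = 0 := by
      rw [setIntegral_congr_fun measurableSet_Ioi
        (fun x hx => show f x = (0 : ℝ) by
          have hx' : A < x := hx
          simp [hf, max_eq_right (by linarith : S - x ≤ 0)])]
      simp
    rw [hmaxL, hmax1, hI]; ring
  · -- S > A
    have hmax1 : max (S - A) 0 = S - A := max_eq_left (by linarith)
    have hSβ : K₀ < S ^ β := by
      rw [← hAβ]
      exact Real.rpow_lt_rpow hA0.le hSA hβ
    have hmaxL : max (S ^ β - K₀) 0 = S ^ β - K₀ := max_eq_left (by linarith)
    -- split the integral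
    have hsplit : (∫ K in Ioi A, f K) = ∫ K in Ioc A S, f K := by
      have hunion : Ioc A S ∪ Ioi S = Ioi A := Ioc_union_Ioi_eq_Ioi hSA.le
      have hdisj : Disjoint (Ioc A S) (Ioi S) := Ioc_disjoint_Ioi le_rfl
      have hIzero : (∫ K in Ioi S, f K) = 0 := by
        rw [setIntegral_congr_fun measurableSet_Ioi
          (fun x hx => show f x = (0 : ℝ) by
            have hx' : S < x := hx
            simp [hf, max_eq_right (by linarith : S - x ≤ 0)])]
        simp
      rw [← hunion, setIntegral_union hdisj measurableSet_Ioi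
        (hint.mono_set (by rw [← hunion]; exact subset_union_left))
        (hint.mono_set (by rw [← hunion]; exact subset_union_right)), hIzero, add_zero]
    have hInotZero : 0 ∉ [[A, S]] := by
      rw [Set.mem_uIcc]; push_neg
      constructor <;> intro h <;> linarith
    rcases eq_or_ne β 1 with hβ1 | hβ1
    · -- β = 1 : coefficient vanishes
      subst hβ1
      have hA1 : A = K₀ := by
        rw [hA]; norm_num
      rw [hmaxL, hmax1, hA1]
      have : (K₀ : ℝ) ^ ((1:ℝ) - 1) = 1 := by
        norm_num
      rw [show (1:ℝ) - 1 = 0 by ring] at *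
      rw [Real.rpow_zero]
      have h1 : S ^ (1:ℝ) = S := Real.rpow_one S
      rw [h1]; ring
    · -- β ≠ 1
      have hβ1' : β - 1 ≠ 0 := sub_ne_zero_of_ne hβ1
      have hβ2 : β - 2 ≠ -1 := by intro h; apply hβ1; linarith
      have hcong : (∫ K in Ioc A S, f K)
          = ∫ K in Ioc A S, (S * K ^ (β - 2) - K ^ (β - 1)) := by
        apply setIntegral_congr_fun measurableSet_Ioc
        intro x hx
        have hx0 : 0 < x := lt_trans hA0 hx.1
        have hmx : max (S - x) 0 = S - x := max_eq_left (by linarith [hx.2])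
        have hpow : x ^ (β - 2) * x = x ^ (β - 1) := by
          rw [← Real.rpow_add_one hx0.ne' (β - 2)]
          congr 1; ring
        simp only [hf]
        rw [hmx, ← hpow]; ring
      have hii1 : IntervalIntegrable (fun x : ℝ => x ^ (β - 2)) volume A S :=
        intervalIntegral.intervalIntegrable_rpow (Or.inr hInotZero)
      have hii2 : IntervalIntegrable (fun x : ℝ => x ^ (β - 1)) volume A S :=
        intervalIntegral.intervalIntegrable_rpow (Or.inr hInotZero)
      have hval : (∫ K in Ioc A S, (S * K ^ (β - 2) - K ^ (β - 1)))
          = S * ((S ^ (β - 1) - A ^ (β - 1)) / (β - 1)) - (S ^ β - A ^ β) / β := by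
        rw [← intervalIntegral.integral_of_le hSA.le]
        rw [intervalIntegral.integral_sub (hii1.const_mul S) hii2,
          intervalIntegral.integral_const_mul,
          integral_rpow (Or.inr ⟨hβ2, hInotZero⟩),
          integral_rpow (Or.inr ⟨(by intro h; apply hβ.ne'; linarith : β - 1 ≠ -1), hInotZero⟩),
          (by ring : β - 2 + 1 = β - 1), (by ring : β - 1 + 1 = β)]
      rw [hmaxL, hmax1, hsplit, hcong, hval]
      have hxS : S * S ^ (β - 1) = S ^ β := by
        rw [mul_comm, ← Real.rpow_add_one hS.ne' (β - 1)]
        congr 1; ring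
      have hxA : A * A ^ (β - 1) = A ^ β := by
        rw [mul_comm, ← Real.rpow_add_one hA0.ne' (β - 1)]
        congr 1; ring
      rw [hAβ] at hxA
      rw [hAβ]
      have expand : β * (β - 1) * (S * ((S ^ (β - 1) - A ^ (β - 1)) / (β - 1)) - (S ^ β - K₀) / β)
          = β * S * S ^ (β - 1) - β * S * A ^ (β - 1) - (β - 1) * S ^ β + (β - 1) * K₀ := by
        field_simp
        ring
      rw [expand]
      linear_combination (-β) * hxS + β * hxA
end

section
/- For every real β, every K_1 > 0 and every S > 0: S^{β−1}·(K_1 − S)_+ = K_1^{β−1}·(K_1 − S)_+ + (β−1)·∫_0^{K_1} K^{β−2}·((β−2)·K_1/K − β)·(K − S)_+ dK, where the integral converges absolutely (the integrand vanishes for K ≤ S). (Example: exact static replication of the exotic payoff S^{β−1}(K_1 − S)_+, arising from the semi-static hedge of a down-and-in call, by a put at the kink K_1 with weight equal to the jump K_1^{β−1} of the derivative plus a continuum of puts.) -/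
open MeasureTheory Set

/-! The payoff `h K = K ^ (β - 1) * (K₁ - K)` satisfies `h K₁ = 0`, `h' K₁ = -K₁ ^ (β - 1)` and
`h'' K = (β - 1) * K ^ (β - 2) * ((β - 2) * K₁ / K - β)`, so for `S < K₁` the identity is the
first-order Taylor expansion of `h` at `K₁` with integral remainder,
`h S = h K₁ + h' K₁ * (S - K₁) + ∫ K in S..K₁, h'' K * (K - S)`.
For `K₁ ≤ S` every put is out of the money and both sides vanish. -/

theorem intervalIntegral.integral_second_deriv_mul_sub {f f' f'' : ℝ → ℝ} {a b : ℝ}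
    (hf : ∀ x ∈ uIcc a b, HasDerivAt f (f' x) x) (hf' : ∀ x ∈ uIcc a b, HasDerivAt f' (f'' x) x)
    (hf'' : IntervalIntegrable f'' volume a b) :
    ∫ x in a..b, f'' x * (x - a) = f' b * (b - a) - f b + f a := by
  have hF : ∀ x ∈ uIcc a b, HasDerivAt (fun y => f' y * (y - a) - f y) (f'' x * (x - a)) x := by
    intro x hx
    simpa using ((hf' x hx).fun_mul ((hasDerivAt_id' x).sub_const a)).fun_sub (hf x hx)
  rw [intervalIntegral.integral_eq_sub_of_hasDerivAt hF
    (hf''.mul_continuousOn (continuousOn_id.sub continuousOn_const))]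
  ring

theorem setIntegral_Ioo_mul_max_sub {φ : ℝ → ℝ} {S b : ℝ} (hS : 0 ≤ S) :
    ∫ K in Ioo 0 b, φ K * max (K - S) 0 = ∫ K in Ioo S b, φ K * (K - S) := by
  rw [setIntegral_eq_of_subset_of_forall_sdiff_eq_zero measurableSet_Ioo
    (Ioo_subset_Ioo_left hS)]
  · refine setIntegral_congr_fun measurableSet_Ioo fun K hK => ?_
    rw [max_eq_left (sub_nonneg.2 hK.1.le)]
  · intro K hK
    have hKS : K ≤ S := not_lt.1 fun h => hK.2 ⟨h, hK.1.2⟩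
    rw [max_eq_right (sub_nonpos.2 hKS), mul_zero]

theorem IntegrableOn.mul_max_sub {φ : ℝ → ℝ} {S b : ℝ}
    (h : IntegrableOn (fun K => φ K * (K - S)) (Ioo S b)) :
    IntegrableOn (fun K => φ K * max (K - S) 0) (Ioo 0 b) := by
  refine IntegrableOn.of_forall_sdiff_eq_zero (s := Ioo S b) ?_ measurableSet_Ioo ?_
  · refine (integrableOn_congr_fun (fun K hK => ?_) measurableSet_Ioo).1 h
    rw [max_eq_left (sub_nonneg.2 hK.1.le)]
  · intro K hK
    have hKS : K ≤ S := not_lt.1 fun h => hK.2 ⟨h, hK.1.2⟩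
    rw [max_eq_right (sub_nonpos.2 hKS), mul_zero]

theorem Real.hasDerivAt_rpow_mul_sub {β c x : ℝ} (hx : 0 < x) :
    HasDerivAt (fun K => K ^ (β - 1) * (c - K)) (x ^ (β - 2) * ((β - 1) * c - β * x)) x := by
  refine ((Real.hasDerivAt_rpow_const (p := β - 1) (Or.inl hx.ne')).fun_mul
    ((hasDerivAt_id' x).const_sub c)).congr_deriv ?_
  rw [show β - 1 - 1 = β - 2 by ring, show β - 1 = β - 2 + 1 by ring, Real.rpow_add_one hx.ne']
  ring

theorem Real.hasDerivAt_rpow_mul_sub_mul {β c x : ℝ} (hx : 0 < x) :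
    HasDerivAt (fun K => K ^ (β - 2) * ((β - 1) * c - β * K))
      ((β - 1) * (x ^ (β - 2) * ((β - 2) * c / x - β))) x := by
  refine ((Real.hasDerivAt_rpow_const (p := β - 2) (Or.inl hx.ne')).fun_mul
    (((hasDerivAt_id' x).const_mul β).const_sub ((β - 1) * c))).congr_deriv ?_
  rw [Real.rpow_sub_one hx.ne']
  field_simp
  ring

/-- Exact static replication of the exotic payoff `S^(β-1)·(K₁ - S)_+` arising from the
semi-static hedge of a down-and-in call, by a put at the kink `K₁` with weight equal to the
jump `K₁^(β-1)` of the derivative plus a continuum of puts. -/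
theorem stmt_6 :
    ∀ β K₁ S : ℝ, 0 < K₁ → 0 < S →
      IntegrableOn
        (fun K => K ^ (β - 2) * ((β - 2) * K₁ / K - β) * max (K - S) 0) (Ioo 0 K₁) ∧
      S ^ (β - 1) * max (K₁ - S) 0
        = K₁ ^ (β - 1) * max (K₁ - S) 0
          + (β - 1) * ∫ K in Ioo 0 K₁,
              K ^ (β - 2) * ((β - 2) * K₁ / K - β) * max (K - S) 0 := by
  intro β K₁ S _ hS
  have hpos : ∀ K ∈ Icc S K₁, 0 < K := fun K hK => hS.trans_le hK.1
  have hφ : ContinuousOn (fun K => K ^ (β - 2) * ((β - 2) * K₁ / K - β)) (Icc S K₁) :=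
    (ContinuousOn.rpow_const continuousOn_id fun K hK => Or.inl (hpos K hK).ne').mul
      ((continuousOn_const.div continuousOn_id fun K hK => (hpos K hK).ne').sub continuousOn_const)
  refine ⟨IntegrableOn.mul_max_sub
    ((hφ.mul (continuousOn_id.sub continuousOn_const)).integrableOn_Icc.mono_set
      Ioo_subset_Icc_self), ?_⟩
  rw [setIntegral_Ioo_mul_max_sub (φ := fun K => K ^ (β - 2) * ((β - 2) * K₁ / K - β)) hS.le]
  rcases le_or_gt K₁ S with hle | hlt
  · simp [max_eq_right (sub_nonpos.2 hle), Ioo_eq_empty_of_le hle]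
  have hS_K₁ : uIcc S K₁ = Icc S K₁ := uIcc_of_le hlt.le
  have htaylor := intervalIntegral.integral_second_deriv_mul_sub (a := S) (b := K₁)
    (fun x hx => Real.hasDerivAt_rpow_mul_sub (β := β) (c := K₁) (hpos x (hS_K₁ ▸ hx)))
    (fun x hx => Real.hasDerivAt_rpow_mul_sub_mul (hpos x (hS_K₁ ▸ hx)))
    ((continuousOn_const.mul hφ).intervalIntegrable_of_Icc hlt.le)
  rw [← integral_Ioc_eq_integral_Ioo, ← intervalIntegral.integral_of_le hlt.le,
    ← intervalIntegral.integral_const_mul]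
  simp only [mul_assoc] at htaylor ⊢
  have hK₁ : K₁ ^ (β - 1) = K₁ ^ (β - 2) * K₁ := by
    rw [show β - 1 = β - 2 + 1 by ring, Real.rpow_add_one (hS.trans hlt).ne']
  rw [htaylor, max_eq_left (sub_nonneg.2 hlt.le), hK₁]
  ring
end

section
/- Let 0 < K_1 ≤ K_2 and set k_1 = ln K_1. Then for every ξ ∈ ℂ with Im ξ > 0, the integral ∫_ℝ e^{−i·x·ξ}·(K_1 − e^x)_+·(K_2 − e^x)_+ dx converges absolutely and equals K_1 · (e^{−i·k_1·ξ}/(iξ − 1)) · (K_2/(iξ) − K_1/(iξ − 2)). (Equation (prodPuts): the Fourier transform in log-price of the product of two put payoffs.) -/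
open MeasureTheory Set

/-
On `x < log K₁` both puts are in the money, so the integrand is `e^{ax} (K₁ - e^x)(K₂ - e^x)` with
`a = -iξ`, a combination of the exponentials `e^{(a+n)x}`, `n = 0, 1, 2`, and it vanishes for
`x ≥ log K₁`. Since `Re a = Im ξ > 0`, each `e^{(a+n)x}` is integrable on `(-∞, log K₁]` with
integral `e^{(a+n) log K₁}/(a+n) = K₁ⁿ e^{a log K₁}/(a+n)`; the closed form follows by partial
fractions.
-/

lemma Complex.exp_add_natCast_mul (a : ℂ) (n : ℕ) (x : ℝ) :
    Complex.exp ((a + n) * x) = Complex.exp (a * x) * (Real.exp x : ℂ) ^ n := by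
  rw [add_mul, Complex.exp_add, Complex.ofReal_exp, ← Complex.exp_nat_mul]

lemma cexp_mul_sub_mul_sub_eq (a b c : ℂ) (x : ℝ) :
    Complex.exp (a * x) * (b - Real.exp x) * (c - Real.exp x) =
      b * c * Complex.exp (a * x) - (b + c) * Complex.exp ((a + 1) * x)
        + Complex.exp ((a + 2) * x) := by
  rw [← Nat.cast_one, ← Nat.cast_two (R := ℂ), Complex.exp_add_natCast_mul,
    Complex.exp_add_natCast_mul]
  ring

lemma integrableOn_Iic_cexp_mul_sub_mul_sub {a : ℂ} (ha : 0 < a.re) (b c : ℂ) (k : ℝ) :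
    IntegrableOn (fun x : ℝ => Complex.exp (a * x) * (b - Real.exp x) * (c - Real.exp x))
      (Iic k) := by
  have ha₁ : 0 < (a + 1).re := by simp only [Complex.add_re, Complex.one_re]; positivity
  have ha₂ : 0 < (a + 2).re := by simp only [Complex.add_re, Complex.re_ofNat]; positivity
  simp_rw [cexp_mul_sub_mul_sub_eq]
  exact (((integrableOn_exp_mul_complex_Iic ha k).const_mul _).sub
    ((integrableOn_exp_mul_complex_Iic ha₁ k).const_mul _)).add
    (integrableOn_exp_mul_complex_Iic ha₂ k)

lemma integral_Iic_cexp_mul_sub_mul_sub {a : ℂ} (ha : 0 < a.re) (b c : ℂ) (k : ℝ) :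
    ∫ x in Iic k, Complex.exp (a * x) * (b - Real.exp x) * (c - Real.exp x) =
      b * c * (Complex.exp (a * k) / a) - (b + c) * (Complex.exp ((a + 1) * k) / (a + 1))
        + Complex.exp ((a + 2) * k) / (a + 2) := by
  have ha₁ : 0 < (a + 1).re := by simp only [Complex.add_re, Complex.one_re]; positivity
  have ha₂ : 0 < (a + 2).re := by simp only [Complex.add_re, Complex.re_ofNat]; positivity
  have h₀ := integrableOn_exp_mul_complex_Iic ha k
  have h₁ := integrableOn_exp_mul_complex_Iic ha₁ k
  have h₂ := integrableOn_exp_mul_complex_Iic ha₂ k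
  simp_rw [cexp_mul_sub_mul_sub_eq]
  rw [integral_add, integral_sub, integral_const_mul, integral_const_mul,
    integral_exp_mul_complex_Iic ha, integral_exp_mul_complex_Iic ha₁,
    integral_exp_mul_complex_Iic ha₂]
  exacts [h₀.const_mul _, h₁.const_mul _, (h₀.const_mul _).sub (h₁.const_mul _), h₂]

lemma cexp_mul_put_mul_put_eq_indicator {K₁ K₂ : ℝ} (hK₁ : 0 < K₁) (hK₁₂ : K₁ ≤ K₂) (a : ℂ) :
    (fun x : ℝ => Complex.exp (a * x) *
        ((max (K₁ - Real.exp x) 0 : ℝ) : ℂ) * ((max (K₂ - Real.exp x) 0 : ℝ) : ℂ)) =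
      (Iio (Real.log K₁)).indicator
        (fun x => Complex.exp (a * x) * (K₁ - Real.exp x) * (K₂ - Real.exp x)) := by
  ext x
  by_cases hx : x ∈ Iio (Real.log K₁)
  · have hexp : Real.exp x < K₁ := (Real.lt_log_iff_exp_lt hK₁).mp hx
    rw [indicator_of_mem hx, max_eq_left (by linarith), max_eq_left (by linarith)]
    push_cast
    rfl
  · have hexp : K₁ ≤ Real.exp x := (Real.log_le_iff_le_exp hK₁).mp (not_lt.mp hx)
    rw [indicator_of_notMem hx, max_eq_right (by linarith)]
    simp

lemma integral_Iic_log_cexp_mul_sub_mul_sub {a : ℂ} (ha : 0 < a.re) {K₁ : ℝ} (hK₁ : 0 < K₁)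
    (K₂ : ℂ) :
    ∫ x in Iic (Real.log K₁), Complex.exp (a * x) * (K₁ - Real.exp x) * (K₂ - Real.exp x) =
      K₁ * (Complex.exp (a * Real.log K₁) / (a + 1)) * (K₂ / a - K₁ / (a + 2)) := by
  have hpow (n : ℕ) :
      Complex.exp ((a + n) * Real.log K₁) = Complex.exp (a * Real.log K₁) * K₁ ^ n := by
    rw [Complex.exp_add_natCast_mul, Real.exp_log hK₁]
  have h₁ := hpow 1
  have h₂ := hpow 2
  simp only [Nat.cast_one, Nat.cast_ofNat, pow_one] at h₁ h₂
  have ha₀ : a ≠ 0 := fun h => by simp [h] at ha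
  have ha₁ : a + 1 ≠ 0 := fun h => by simp [eq_neg_of_add_eq_zero_left h] at ha; linarith
  have ha₂ : a + 2 ≠ 0 := fun h => by simp [eq_neg_of_add_eq_zero_left h] at ha; linarith
  rw [integral_Iic_cexp_mul_sub_mul_sub ha, h₁, h₂]
  field_simp
  ring

/-- Equation (prodPuts): the Fourier transform in log-price of the product of two put payoffs. -/
theorem stmt_7 (K₁ K₂ : ℝ) (hK₁ : 0 < K₁) (hK₁₂ : K₁ ≤ K₂) :
    ∀ ξ : ℂ, 0 < ξ.im →
      Integrable (fun x : ℝ =>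
        Complex.exp (-(Complex.I * x * ξ)) *
          ((max (K₁ - Real.exp x) 0 : ℝ) : ℂ) * ((max (K₂ - Real.exp x) 0 : ℝ) : ℂ)) ∧
      (∫ x : ℝ, Complex.exp (-(Complex.I * x * ξ)) *
          ((max (K₁ - Real.exp x) 0 : ℝ) : ℂ) * ((max (K₂ - Real.exp x) 0 : ℝ) : ℂ))
        = (K₁ : ℂ) * (Complex.exp (-(Complex.I * (Real.log K₁) * ξ)) / (Complex.I * ξ - 1)) *
            ((K₂ : ℂ) / (Complex.I * ξ) - (K₁ : ℂ) / (Complex.I * ξ - 2)) := by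
  intro ξ hξ
  obtain ⟨a, hIξ⟩ : ∃ a : ℂ, Complex.I * ξ = -a := ⟨-(Complex.I * ξ), (neg_neg _).symm⟩
  have ha : 0 < a.re := by
    rw [← neg_neg a, ← hIξ]; simpa [Complex.mul_re] using hξ
  have hlin (x : ℝ) : -(Complex.I * x * ξ) = a * x := by rw [mul_right_comm, hIξ]; ring
  simp_rw [hlin, cexp_mul_put_mul_put_eq_indicator hK₁ hK₁₂,
    integrable_indicator_iff measurableSet_Iio, integral_indicator measurableSet_Iio,
    ← integral_Iic_eq_integral_Iio]
  refine ⟨(integrableOn_Iic_cexp_mul_sub_mul_sub ha _ _ _).mono_set Iio_subset_Iic_self, ?_⟩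
  rw [integral_Iic_log_cexp_mul_sub_mul_sub ha hK₁, hIξ, ← neg_add', ← neg_add', div_neg,
    div_neg, div_neg]
  ring
end

section
/- Let H, K > 0 with K ≥ H, let β ∈ ℝ, and set h = ln H, k = ln K. Then for every ξ ∈ ℂ with Im ξ > 1 − β, the integral ∫_ℝ e^{−i·x·ξ} · H^{−β}·e^{β·x}·(H²·e^{−x} − K)_+ · 1_{(−∞,h]}(x) dx converges absolutely and equals H^{β}·K^{1−β}·e^{−i·(2h−k)·ξ} / ((−iξ + β − 1)·(−iξ + β)). (The Fourier transform in log-price of the payoff G_ex(S) = (S/H)^β·(H²/S − K)_+·1_{S ≤ H} of the exotic European option used in semi-static hedging of the down-and-in call with barrier H and strike K.) -/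
/-!
With `a = 2 log H - log K ≤ log H` and `c = β - iξ`, the payoff vanishes for `x > a` and equals
`H^(-β) K e^(βx) (e^(a-x) - 1)` for `x ≤ a`, so the transform is
`H^(-β) K ∫_{x ≤ a} (e^a e^((c-1)x) - e^(cx)) dx`. Both exponentials are integrable on `(-∞, a]`
because `Re c > 1`, and the two terms combine through `1/(c-1) - 1/c = 1/((c-1)c)`.
-/

open MeasureTheory Set

lemma sq_mul_exp_neg_eq_mul_exp_sub {H K : ℝ} (hH : 0 < H) (hK : 0 < K) (x : ℝ) :
    H ^ 2 * Real.exp (-x) = K * Real.exp (2 * Real.log H - Real.log K - x) := by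
  have h2 : 2 * Real.log H = Real.log (H ^ 2) := by rw [Real.log_pow]; norm_num
  rw [sub_eq_add_neg _ x, Real.exp_add, Real.exp_sub, h2, Real.exp_log hK,
    Real.exp_log (by positivity)]
  field_simp

lemma max_mul_exp_sub_sub_zero {K : ℝ} (hK : 0 ≤ K) (a x : ℝ) :
    max (K * Real.exp (a - x) - K) 0 = (Iic a).indicator (fun y => K * (Real.exp (a - y) - 1)) x := by
  by_cases hx : x ≤ a
  · rw [indicator_of_mem (mem_Iic.2 hx), max_eq_left] <;>
    nlinarith [Real.one_le_exp (sub_nonneg.2 hx)]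
  · rw [indicator_of_notMem (by simpa using hx), max_eq_right]
    nlinarith [Real.exp_le_one_iff.2 (sub_nonpos.2 (not_le.1 hx).le)]

lemma rpow_neg_mul_mul_exp_eq {H K : ℝ} (hH : 0 < H) (hK : 0 < K) (β : ℝ) :
    H ^ (-β) * K * Real.exp (β * (2 * Real.log H - Real.log K)) = H ^ β * K ^ (1 - β) := by
  rw [Real.rpow_def_of_pos hH, Real.rpow_def_of_pos hH, Real.rpow_def_of_pos hK]
  calc _ = Real.exp (Real.log H * -β + β * (2 * Real.log H - Real.log K) + Real.log K) := by
        rw [Real.exp_add, Real.exp_add, Real.exp_log hK]; ring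
    _ = _ := by rw [← Real.exp_add]; ring_nf

lemma cexp_mul_mul_exp_sub_sub_one (c : ℂ) (a x : ℝ) :
    Complex.exp (c * x) * ((Real.exp (a - x) - 1 : ℝ) : ℂ)
      = Real.exp a * Complex.exp ((c - 1) * x) - Complex.exp (c * x) := by
  have hmul : Complex.exp (c * x) * Real.exp (a - x) = Real.exp a * Complex.exp ((c - 1) * x) := by
    push_cast
    rw [← Complex.exp_add, ← Complex.exp_add]
    ring_nf
  push_cast at hmul ⊢
  rw [mul_sub, hmul, mul_one]

lemma integrableOn_cexp_mul_mul_exp_sub_sub_one_Iic {c : ℂ} (hc : 1 < c.re) (a : ℝ) :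
    IntegrableOn (fun x : ℝ => Complex.exp (c * x) * ((Real.exp (a - x) - 1 : ℝ) : ℂ)) (Iic a) := by
  simp only [cexp_mul_mul_exp_sub_sub_one]
  exact ((integrableOn_exp_mul_complex_Iic (by simpa using hc) a).const_mul _).sub
    (integrableOn_exp_mul_complex_Iic (by linarith) a)

lemma integral_cexp_mul_mul_exp_sub_sub_one_Iic {c : ℂ} (hc : 1 < c.re) (a : ℝ) :
    ∫ x in Iic a, Complex.exp (c * x) * ((Real.exp (a - x) - 1 : ℝ) : ℂ)
      = Complex.exp (c * a) / ((c - 1) * c) := by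
  have hc₀ : 0 < c.re := by linarith
  have hc₁ : 0 < (c - 1).re := by simpa using hc
  simp only [cexp_mul_mul_exp_sub_sub_one]
  rw [integral_sub ((integrableOn_exp_mul_complex_Iic hc₁ a).const_mul _)
      (integrableOn_exp_mul_complex_Iic hc₀ a), integral_const_mul,
    integral_exp_mul_complex_Iic hc₁, integral_exp_mul_complex_Iic hc₀]
  have hc₀' : c ≠ 0 := fun h => by simp [h] at hc₀
  have hc₁' : c - 1 ≠ 0 := fun h => by simp [h] at hc₁
  rw [Complex.ofReal_exp, mul_div_assoc', ← Complex.exp_add]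
  field_simp
  ring_nf

lemma cexp_sub_I_mul_mul (β a : ℝ) (ξ : ℂ) :
    Complex.exp ((β - Complex.I * ξ) * a) = Real.exp (β * a) * Complex.exp (-(Complex.I * a * ξ)) := by
  rw [Complex.ofReal_exp, ← Complex.exp_add]
  push_cast
  ring_nf

lemma payoff_eq_indicator {H K : ℝ} (hH : 0 < H) (hHK : H ≤ K) (β : ℝ) :
    (Iic (Real.log H)).indicator
        (fun y => H ^ (-β) * Real.exp (β * y) * max (H ^ 2 * Real.exp (-y) - K) 0)
      = (Iic (2 * Real.log H - Real.log K)).indicator (fun y => H ^ (-β) * K *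
          (Real.exp (β * y) * (Real.exp (2 * Real.log H - Real.log K - y) - 1))) := by
  have hK : 0 < K := hH.trans_le hHK
  have hsub : Iic (2 * Real.log H - Real.log K) ⊆ Iic (Real.log H) :=
    Iic_subset_Iic.2 (by linarith [Real.log_le_log hH hHK])
  ext y
  simp only [sq_mul_exp_neg_eq_mul_exp_sub hH hK, max_mul_exp_sub_sub_zero hK.le, indicator_apply]
  split_ifs with hyH hya hya <;> first | exact absurd (hsub hya) hyH | ring

lemma cexp_mul_payoff_eq_indicator {H K : ℝ} (hH : 0 < H) (hHK : H ≤ K) (β : ℝ) (ξ : ℂ) :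
    (fun x : ℝ => Complex.exp (-(Complex.I * x * ξ)) *
        ((Set.indicator (Iic (Real.log H))
          (fun y => H ^ (-β) * Real.exp (β * y) * max (H ^ 2 * Real.exp (-y) - K) 0) x : ℝ) : ℂ))
      = (Iic (2 * Real.log H - Real.log K)).indicator (fun x : ℝ => ((H ^ (-β) * K : ℝ) : ℂ) *
          (Complex.exp ((β - Complex.I * ξ) * x) *
            ((Real.exp (2 * Real.log H - Real.log K - x) - 1 : ℝ) : ℂ))) := by
  ext x
  rw [payoff_eq_indicator hH hHK]
  by_cases hx : x ∈ Iic (2 * Real.log H - Real.log K)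
  · rw [indicator_of_mem hx, indicator_of_mem hx, cexp_sub_I_mul_mul]
    push_cast
    ring
  · simp [indicator_of_notMem hx]

/-- The Fourier transform in log-price of the payoff
`G_ex(S) = (S/H)^β·(H²/S - K)_+·1_{S ≤ H}` of the exotic European option used in semi-static
hedging of the down-and-in call with barrier `H` and strike `K ≥ H`. -/
theorem stmt_8 (H K β : ℝ) (hH : 0 < H) (hHK : H ≤ K) :
    ∀ ξ : ℂ, 1 - β < ξ.im →
      Integrable (fun x : ℝ =>
        Complex.exp (-(Complex.I * x * ξ)) *
          ((Set.indicator (Iic (Real.log H))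
            (fun y => H ^ (-β) * Real.exp (β * y) * max (H ^ 2 * Real.exp (-y) - K) 0) x : ℝ) : ℂ)) ∧
      (∫ x : ℝ, Complex.exp (-(Complex.I * x * ξ)) *
          ((Set.indicator (Iic (Real.log H))
            (fun y => H ^ (-β) * Real.exp (β * y) * max (H ^ 2 * Real.exp (-y) - K) 0) x : ℝ) : ℂ))
        = ((H ^ β : ℝ) : ℂ) * ((K ^ (1 - β) : ℝ) : ℂ) *
            Complex.exp (-(Complex.I * ((2 * Real.log H - Real.log K : ℝ) : ℂ) * ξ)) /
            ((-(Complex.I * ξ) + (β : ℂ) - 1) * (-(Complex.I * ξ) + (β : ℂ))) := by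
  intro ξ hξ
  have hc : 1 < ((β : ℂ) - Complex.I * ξ).re := by simpa using (by linarith : 1 < β + ξ.im)
  rw [cexp_mul_payoff_eq_indicator hH hHK, integrable_indicator_iff measurableSet_Iic,
    integral_indicator measurableSet_Iic, integral_const_mul,
    integral_cexp_mul_mul_exp_sub_sub_one_Iic hc]
  refine ⟨(integrableOn_cexp_mul_mul_exp_sub_sub_one_Iic hc _).const_mul _, ?_⟩
  rw [cexp_sub_I_mul_mul, ← Complex.ofReal_mul (H ^ β), ← rpow_neg_mul_mul_exp_eq hH (hH.trans_le hHK) β]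
  simp only [Complex.ofReal_mul]
  ring
end

section
/- Let H, K > 0 with K ≥ H, let β ∈ ℝ, and set h = ln H, k = ln K. Then for every ξ ∈ ℂ with Im ξ > 2(1 − β), the integral ∫_ℝ e^{−i·x·ξ} · (H^{−β}·e^{β·x}·(H²·e^{−x} − K)_+ · 1_{(−∞,h]}(x))² dx converges absolutely and equals 2·H^{2β}·K^{2(1−β)}·e^{−i·(2h−k)·ξ} / ((−iξ + 2β − 2)·(−iξ + 2β − 1)·(−iξ + 2β)). (Equation (hG00): the Fourier transform in log-price of the squared payoff of the exotic European option G_ex(S) = (S/H)^β·(H²/S − K)_+·1_{S ≤ H}, needed to compute second moments of the hedging portfolio.) -/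
open MeasureTheory Set

/-!
With `m = 2h - k` the point where `H²e^{-x} = K`, the payoff vanishes on `(m, h]`, and in the
shifted variable `t = x - m` its square is `H^{2β} K^{2(1-β)} e^{2βt} (e^{-t} - 1)²` on `t ≤ 0`.
The shift produces the phase `e^{-imξ}`, and with `c = 2β - iξ` what remains is
`∫_{t ≤ 0} e^{ct} (e^{-t} - 1)² dt = 1/(c-2) - 2/(c-1) + 1/c = 2/((c-2)(c-1)c)`.
-/

lemma cexp_mul_mul_cexp_neg_sub_one_sq (c : ℂ) (t : ℝ) :
    Complex.exp (c * t) * (Complex.exp (-t) - 1) ^ 2 =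
      Complex.exp ((c - 2) * t) - 2 * Complex.exp ((c - 1) * t) + Complex.exp (c * t) := by
  simp only [sub_mul, Complex.exp_sub, one_mul, Complex.exp_neg]
  rw [show (2 : ℂ) * t = t + t by ring, Complex.exp_add]
  field_simp
  ring

lemma integrableOn_cexp_mul_mul_cexp_neg_sub_one_sq_Iic {c : ℂ} (hc : 2 < c.re) :
    IntegrableOn (fun t : ℝ => Complex.exp (c * t) * (Complex.exp (-t) - 1) ^ 2) (Iic 0) := by
  have h2 : 0 < (c - 2).re := by simp; linarith
  have h1 : 0 < (c - 1).re := by simp; linarith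
  simp only [cexp_mul_mul_cexp_neg_sub_one_sq]
  exact ((integrableOn_exp_mul_complex_Iic h2 0).sub
    ((integrableOn_exp_mul_complex_Iic h1 0).const_mul 2)).add
    (integrableOn_exp_mul_complex_Iic (by linarith) 0)

lemma integral_cexp_mul_mul_cexp_neg_sub_one_sq_Iic {c : ℂ} (hc : 2 < c.re) :
    ∫ t in Iic (0 : ℝ), Complex.exp (c * t) * (Complex.exp (-t) - 1) ^ 2 =
      2 / ((c - 2) * (c - 1) * c) := by
  have h2 : 0 < (c - 2).re := by simp; linarith
  have h1 : 0 < (c - 1).re := by simp; linarith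
  have h0 : 0 < c.re := by linarith
  have hI := fun {a : ℂ} (ha : 0 < a.re) => integrableOn_exp_mul_complex_Iic ha 0
  have hne : ∀ {a : ℂ}, 0 < a.re → a ≠ 0 := fun ha h => by simp [h] at ha
  simp only [cexp_mul_mul_cexp_neg_sub_one_sq]
  rw [integral_add ?_ (hI h0), integral_sub (hI h2) ((hI h1).const_mul 2), integral_const_mul,
    integral_exp_mul_complex_Iic h2, integral_exp_mul_complex_Iic h1,
    integral_exp_mul_complex_Iic h0]
  · simp only [Complex.ofReal_zero, mul_zero, Complex.exp_zero]
    field_simp [hne h2, hne h1, hne h0]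
    ring
  · exact (hI h2).sub ((hI h1).const_mul 2)

lemma sq_mul_exp_neg_sub_eq {H K : ℝ} (hH : 0 < H) (hK : 0 < K) (x : ℝ) :
    H ^ 2 * Real.exp (-x) - K = K * (Real.exp (-(x - (2 * Real.log H - Real.log K))) - 1) := by
  rw [mul_sub, mul_one, Real.exp_neg, Real.exp_neg, Real.exp_sub, Real.exp_sub, Real.exp_log hK,
    show 2 * Real.log H = Real.log (H ^ 2) by rw [Real.log_pow]; norm_num,
    Real.exp_log (by positivity)]
  field_simp

lemma sq_rpow_neg_mul_exp_mul_mul_eq {H K : ℝ} (hH : 0 < H) (hK : 0 < K) (β x : ℝ) :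
    (H ^ (-β) * Real.exp (β * x) * K) ^ 2 =
      H ^ (2 * β) * K ^ (2 * (1 - β)) *
        Real.exp (2 * β * (x - (2 * Real.log H - Real.log K))) := by
  obtain ⟨h, rfl⟩ : ∃ h, H = Real.exp h := ⟨_, (Real.exp_log hH).symm⟩
  obtain ⟨k, rfl⟩ : ∃ k, K = Real.exp k := ⟨_, (Real.exp_log hK).symm⟩
  simp only [Real.rpow_def_of_pos (Real.exp_pos _), Real.log_exp, ← Real.exp_add,
    ← Real.exp_nat_mul]
  ring_nf

lemma sq_indicator_payoff_eq {H K : ℝ} (hH : 0 < H) (hHK : H ≤ K) (β x : ℝ) :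
    (indicator (Iic (Real.log H))
        (fun y => H ^ (-β) * Real.exp (β * y) * max (H ^ 2 * Real.exp (-y) - K) 0) x) ^ 2 =
      H ^ (2 * β) * K ^ (2 * (1 - β)) *
        indicator (Iic 0) (fun t => Real.exp (2 * β * t) * (Real.exp (-t) - 1) ^ 2)
          (x - (2 * Real.log H - Real.log K)) := by
  have hK : 0 < K := hH.trans_le hHK
  simp only [sq_mul_exp_neg_sub_eq hH hK]
  set m := 2 * Real.log H - Real.log K
  have hmh : m ≤ Real.log H := by linarith [Real.log_le_log hH hHK]
  by_cases hxm : x - m ≤ 0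
  · have hpos : 0 ≤ Real.exp (-(x - m)) - 1 := sub_nonneg.2 (Real.one_le_exp (by linarith))
    rw [indicator_of_mem (mem_Iic.2 (by linarith : x ≤ Real.log H)),
      indicator_of_mem (mem_Iic.2 hxm), max_eq_left (mul_nonneg hK.le hpos)]
    linear_combination (Real.exp (-(x - m)) - 1) ^ 2 * sq_rpow_neg_mul_exp_mul_mul_eq hH hK β x
  · have hneg : Real.exp (-(x - m)) - 1 ≤ 0 :=
      sub_nonpos.2 (Real.exp_le_one_iff.2 (by linarith))
    rw [indicator_of_notMem (s := Iic 0) (by simpa using hxm),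
      indicator_apply_eq_zero.2 fun _ => by
        rw [max_eq_right (mul_nonpos_of_nonneg_of_nonpos hK.le hneg), mul_zero]]
    ring

lemma cexp_mul_sq_indicator_payoff_eq {H K : ℝ} (hH : 0 < H) (hHK : H ≤ K) (β : ℝ) (ξ : ℂ)
    (x : ℝ) :
    Complex.exp (-(Complex.I * x * ξ)) *
        (((indicator (Iic (Real.log H))
          (fun y => H ^ (-β) * Real.exp (β * y) * max (H ^ 2 * Real.exp (-y) - K) 0) x) ^ 2 : ℝ) : ℂ) =
      (H ^ (2 * β) : ℝ) * (K ^ (2 * (1 - β)) : ℝ) *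
          Complex.exp (-(Complex.I * (2 * Real.log H - Real.log K : ℝ) * ξ)) *
        indicator (Iic 0)
          (fun t : ℝ => Complex.exp ((-(Complex.I * ξ) + 2 * β) * t) * (Complex.exp (-t) - 1) ^ 2)
          (x - (2 * Real.log H - Real.log K)) := by
  rw [sq_indicator_payoff_eq hH hHK]
  set m := 2 * Real.log H - Real.log K
  by_cases hx : x - m ∈ Iic 0
  · have hphase : Complex.exp (-(Complex.I * x * ξ)) * Complex.exp (2 * β * (x - m)) =
        Complex.exp (-(Complex.I * m * ξ)) * Complex.exp ((-(Complex.I * ξ) + 2 * β) * (x - m)) := by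
      rw [← Complex.exp_add, ← Complex.exp_add]
      ring_nf
    simp only [indicator_of_mem hx]
    push_cast
    linear_combination (↑(H ^ (2 * β)) * ↑(K ^ (2 * (1 - β))) *
      (Complex.exp (-(x - m)) - 1) ^ 2) * hphase
  · simp [indicator_of_notMem hx]

/-- Equation (hG00): the Fourier transform in log-price of the squared payoff of the exotic
European option `G_ex(S) = (S/H)^β·(H²/S - K)_+·1_{S ≤ H}`, needed to compute second moments
of the hedging portfolio. -/
theorem stmt_9 (H K β : ℝ) (hH : 0 < H) (hHK : H ≤ K) :
    ∀ ξ : ℂ, 2 * (1 - β) < ξ.im →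
      Integrable (fun x : ℝ =>
        Complex.exp (-(Complex.I * x * ξ)) *
          (((Set.indicator (Iic (Real.log H))
            (fun y => H ^ (-β) * Real.exp (β * y) * max (H ^ 2 * Real.exp (-y) - K) 0) x) ^ 2 : ℝ) : ℂ)) ∧
      (∫ x : ℝ, Complex.exp (-(Complex.I * x * ξ)) *
          (((Set.indicator (Iic (Real.log H))
            (fun y => H ^ (-β) * Real.exp (β * y) * max (H ^ 2 * Real.exp (-y) - K) 0) x) ^ 2 : ℝ) : ℂ))
        = 2 * ((H ^ (2 * β) : ℝ) : ℂ) * ((K ^ (2 * (1 - β)) : ℝ) : ℂ) *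
            Complex.exp (-(Complex.I * ((2 * Real.log H - Real.log K : ℝ) : ℂ) * ξ)) /
            ((-(Complex.I * ξ) + 2 * (β : ℂ) - 2) * (-(Complex.I * ξ) + 2 * (β : ℂ) - 1) *
              (-(Complex.I * ξ) + 2 * (β : ℂ))) := by
  intro ξ hξ
  have hc : 2 < (-(Complex.I * ξ) + 2 * β).re := by simp; linarith
  have hg := (integrable_indicator_iff measurableSet_Iic).2
    (integrableOn_cexp_mul_mul_cexp_neg_sub_one_sq_Iic hc)
  simp only [cexp_mul_sq_indicator_payoff_eq hH hHK]
  refine ⟨(hg.comp_sub_right _).const_mul _, ?_⟩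
  rw [integral_const_mul, integral_sub_right_eq_self, integral_indicator measurableSet_Iic,
    integral_cexp_mul_mul_cexp_neg_sub_one_sq_Iic hc]
  ring
end

section
/- Let K_1, K_2 > 0 with k_j = ln K_j, let ω > 0 and let s < 3/2 be real. For j = 1, 2 and ξ ∈ ℂ with Im ξ = ω, let Ĝ_j(ξ) = ∫_ℝ e^{−i·x·ξ}·(K_j − e^x)_+ dx (an absolutely convergent integral). Then ∫_ℝ (1 + t²)^s · Ĝ_1(t + iω) · conj(Ĝ_2(t + iω)) dt = (K_1·K_2)^{1+ω} · ∫_ℝ e^{−i·t·(k_1 − k_2)} · (1 + t²)^s / ((t² + ω²)·(t² + (ω+1)²)) dt, and both integrals converge absolutely. (The weighted Sobolev-space scalar product (G_1, G_2)_{s;ω} of two put payoffs G_j(x) = (K_j − e^x)_+, computed in the dual space; used to build approximate static hedging portfolios.) -/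
/-!
On the half-line `x ≤ log K` the put payoff is `K - eˣ`, so for `Im ξ > 0` its Fourier transform
is an integral of two exponentials and equals `e^{(1+c) log K} / (c (1 + c))` with `c = -iξ`.
For `ξ = t + iω` the product `Ĝ₁ conj Ĝ₂` is therefore `(K₁K₂)^{1+ω} e^{-it(k₁-k₂)}` divided by
`|c|²|1+c|² = (t² + ω²)(t² + (ω+1)²)`, and the resulting integrand is `O((1+t²)^{s-2})`,
integrable because `s < 3/2`.
-/

open MeasureTheory Set

section

open Complex ComplexConjugate

lemma cexp_mul_put_eq_indicator {K : ℝ} (hK : 0 < K) (c : ℂ) (x : ℝ) :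
    exp (c * x) * ((max (K - Real.exp x) 0 : ℝ) : ℂ) =
      (Iic (Real.log K)).indicator (fun x : ℝ => K * exp (c * x) - exp ((c + 1) * x)) x := by
  by_cases hx : x ≤ Real.log K
  · have hex : Real.exp x ≤ K := (Real.le_log_iff_exp_le hK).1 hx
    rw [indicator_of_mem (mem_Iic.2 hx), max_eq_left (sub_nonneg.2 hex), add_mul, one_mul,
      exp_add, ofReal_sub, ofReal_exp]
    ring
  · have hex : K ≤ Real.exp x := ((Real.log_lt_iff_lt_exp hK).1 (not_le.1 hx)).le
    rw [indicator_of_notMem (by simpa using hx), max_eq_right (sub_nonpos.2 hex)]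
    simp

lemma integrable_cexp_mul_put {K : ℝ} (hK : 0 < K) {c : ℂ} (hc : 0 < c.re) :
    Integrable (fun x : ℝ => exp (c * x) * ((max (K - Real.exp x) 0 : ℝ) : ℂ)) := by
  simp_rw [cexp_mul_put_eq_indicator hK, integrable_indicator_iff measurableSet_Iic]
  exact ((integrableOn_exp_mul_complex_Iic hc _).const_mul _).sub
    (integrableOn_exp_mul_complex_Iic (by simpa using hc.trans (lt_add_one _)) _)

lemma integral_cexp_mul_put {K : ℝ} (hK : 0 < K) {c : ℂ} (hc : 0 < c.re) :
    ∫ x : ℝ, exp (c * x) * ((max (K - Real.exp x) 0 : ℝ) : ℂ) =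
      exp ((c + 1) * Real.log K) / (c * (c + 1)) := by
  have hc1 : 0 < (c + 1).re := by simpa using hc.trans (lt_add_one _)
  have hc0 : c ≠ 0 := fun h => by simp [h] at hc
  have hc10 : c + 1 ≠ 0 := fun h => by simp [h] at hc1
  simp_rw [cexp_mul_put_eq_indicator hK, integral_indicator measurableSet_Iic]
  rw [integral_sub ((integrableOn_exp_mul_complex_Iic hc _).const_mul _)
      (integrableOn_exp_mul_complex_Iic hc1 _), integral_const_mul,
    integral_exp_mul_complex_Iic hc, integral_exp_mul_complex_Iic hc1]
  have hK' : (K : ℂ) * exp (c * Real.log K) = exp ((c + 1) * Real.log K) := by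
    rw [add_mul, one_mul, exp_add, ← ofReal_exp, Real.exp_log hK, mul_comm]
  rw [← mul_div_assoc, hK']
  field_simp
  ring

lemma integrable_fourier_put {K : ℝ} (hK : 0 < K) {ξ : ℂ} (hξ : 0 < ξ.im) :
    Integrable (fun x : ℝ => exp (-(I * x * ξ)) * ((max (K - Real.exp x) 0 : ℝ) : ℂ)) := by
  simpa only [mul_right_comm I, neg_mul] using
    integrable_cexp_mul_put hK (c := -(I * ξ)) (by simpa using hξ)

lemma integral_fourier_put {K : ℝ} (hK : 0 < K) {ξ : ℂ} (hξ : 0 < ξ.im) :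
    ∫ x : ℝ, exp (-(I * x * ξ)) * ((max (K - Real.exp x) 0 : ℝ) : ℂ) =
      exp ((-(I * ξ) + 1) * Real.log K) / (-(I * ξ) * (-(I * ξ) + 1)) := by
  simpa only [mul_right_comm I, neg_mul] using
    integral_cexp_mul_put hK (c := -(I * ξ)) (by simpa using hξ)

lemma Complex.div_mul_conj_div (a b c : ℂ) :
    a / c * conj (b / c) = a * conj b / normSq c := by
  rw [map_div₀, div_mul_div_comm, mul_conj]

lemma Complex.exp_mul_ofReal_mul_conj (z : ℂ) (a b : ℝ) :
    exp (z * a) * conj (exp (z * b)) = Real.exp (z.re * (a + b)) * exp (I * z.im * (a - b)) := by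
  rw [← exp_conj, map_mul, conj_ofReal, ofReal_exp, ← exp_add, ← exp_add]
  congr 1
  linear_combination (norm := (push_cast; ring)) (b - a) * re_add_im z + b * add_conj z

lemma fourier_put_mul_conj {K₁ K₂ ω : ℝ} (hK₁ : 0 < K₁) (hK₂ : 0 < K₂) (hω : 0 < ω) (t : ℝ) :
    (∫ x : ℝ, exp (-(I * x * ((t : ℂ) + ω * I))) * ((max (K₁ - Real.exp x) 0 : ℝ) : ℂ)) *
        conj (∫ x : ℝ, exp (-(I * x * ((t : ℂ) + ω * I))) * ((max (K₂ - Real.exp x) 0 : ℝ) : ℂ))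
      = (((K₁ * K₂) ^ (1 + ω) : ℝ) : ℂ) *
          exp (-(I * t * ((Real.log K₁ - Real.log K₂ : ℝ) : ℂ))) /
          (((t ^ 2 + ω ^ 2) * (t ^ 2 + (ω + 1) ^ 2) : ℝ) : ℂ) := by
  set c : ℂ := -(I * ((t : ℂ) + ω * I)) with hc
  have hξ : 0 < ((t : ℂ) + ω * I).im := by simpa using hω
  have hc_re : c.re = ω := by simp [hc]
  have hc_im : c.im = -t := by simp [hc]
  have hexp : (Real.exp ((c + 1).re * (Real.log K₁ + Real.log K₂)) : ℂ) =
      (((K₁ * K₂) ^ (1 + ω) : ℝ) : ℂ) := by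
    rw [Real.rpow_def_of_pos (mul_pos hK₁ hK₂), Real.log_mul hK₁.ne' hK₂.ne', add_re, hc_re,
      one_re, add_comm ω, mul_comm]
  have hnormSq : normSq (c * (c + 1)) = (t ^ 2 + ω ^ 2) * (t ^ 2 + (ω + 1) ^ 2) := by
    rw [normSq_mul, normSq_apply, normSq_apply, add_re, add_im, hc_re, hc_im, one_re, one_im,
      add_zero]
    ring
  rw [integral_fourier_put hK₁ hξ, integral_fourier_put hK₂ hξ, ← hc, Complex.div_mul_conj_div,
    Complex.exp_mul_ofReal_mul_conj, hexp, hnormSq, add_im, hc_im, one_im,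
    add_zero, ofReal_neg, mul_neg, neg_mul, ofReal_sub]

end

lemma min_one_sq_mul_one_add_sq_le (a t : ℝ) : min 1 (a ^ 2) * (1 + t ^ 2) ≤ t ^ 2 + a ^ 2 := by
  nlinarith [min_le_left 1 (a ^ 2), min_le_right 1 (a ^ 2), sq_nonneg t]

lemma integrable_one_add_sq_rpow_sub_two {s : ℝ} (hs : s < 3 / 2) :
    Integrable (fun t : ℝ => (1 + t ^ 2) ^ (s - 2)) := by
  have h := integrable_rpow_neg_one_add_norm_sq (E := ℝ) (μ := volume) (r := 4 - 2 * s)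
    (by rw [Module.finrank_self]; push_cast; linarith)
  convert h using 3 with t
  · rw [Real.norm_eq_abs, sq_abs]
  · ring

lemma integrable_one_add_sq_rpow_div {a b s : ℝ} (ha : a ≠ 0) (hb : b ≠ 0) (hs : s < 3 / 2) :
    Integrable (fun t : ℝ => (1 + t ^ 2) ^ s / ((t ^ 2 + a ^ 2) * (t ^ 2 + b ^ 2))) := by
  set m := min 1 (a ^ 2) * min 1 (b ^ 2)
  have hm : 0 < m := mul_pos (lt_min one_pos (by positivity)) (lt_min one_pos (by positivity))
  refine ((integrable_one_add_sq_rpow_sub_two hs).const_mul m⁻¹).mono'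
    (by fun_prop : Measurable _).aestronglyMeasurable ?_
  refine .of_forall fun t => ?_
  have ht : 0 < 1 + t ^ 2 := by positivity
  have hden : m * (1 + t ^ 2) ^ 2 ≤ (t ^ 2 + a ^ 2) * (t ^ 2 + b ^ 2) := by
    calc m * (1 + t ^ 2) ^ 2 = (min 1 (a ^ 2) * (1 + t ^ 2)) * (min 1 (b ^ 2) * (1 + t ^ 2)) := by
          ring
      _ ≤ _ := mul_le_mul (min_one_sq_mul_one_add_sq_le a t) (min_one_sq_mul_one_add_sq_le b t)
          (by positivity) (by positivity)
  rw [Real.norm_of_nonneg (by positivity)]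
  calc (1 + t ^ 2) ^ s / ((t ^ 2 + a ^ 2) * (t ^ 2 + b ^ 2))
      ≤ (1 + t ^ 2) ^ s / (m * (1 + t ^ 2) ^ 2) := by gcongr
    _ = m⁻¹ * (1 + t ^ 2) ^ (s - 2) := by
      rw [Real.rpow_sub ht, Real.rpow_two]
      field_simp

/-- The weighted Sobolev-space scalar product `(G₁, G₂)_{s;ω}` of two put payoffs
`G_j(x) = (K_j - e^x)_+`, computed in the dual space; used to build approximate static
hedging portfolios. -/
theorem stmt_10 (K₁ K₂ ω s : ℝ) (hK₁ : 0 < K₁) (hK₂ : 0 < K₂) (hω : 0 < ω) (hs : s < 3 / 2)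
    (Ghat : ℝ → ℂ → ℂ)
    (hGhat : ∀ (Kj : ℝ) (ξ : ℂ), Ghat Kj ξ =
      ∫ x : ℝ, Complex.exp (-(Complex.I * x * ξ)) * ((max (Kj - Real.exp x) 0 : ℝ) : ℂ)) :
    (∀ t : ℝ, Integrable (fun x : ℝ =>
      Complex.exp (-(Complex.I * x * ((t : ℂ) + ω * Complex.I))) *
        ((max (K₁ - Real.exp x) 0 : ℝ) : ℂ))) ∧
    (∀ t : ℝ, Integrable (fun x : ℝ =>
      Complex.exp (-(Complex.I * x * ((t : ℂ) + ω * Complex.I))) *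
        ((max (K₂ - Real.exp x) 0 : ℝ) : ℂ))) ∧
    Integrable (fun t : ℝ =>
      (((1 + t ^ 2) ^ s : ℝ) : ℂ) * Ghat K₁ ((t : ℂ) + ω * Complex.I) *
        (starRingEnd ℂ) (Ghat K₂ ((t : ℂ) + ω * Complex.I))) ∧
    Integrable (fun t : ℝ =>
      Complex.exp (-(Complex.I * t * ((Real.log K₁ - Real.log K₂ : ℝ) : ℂ))) *
        (((1 + t ^ 2) ^ s / ((t ^ 2 + ω ^ 2) * (t ^ 2 + (ω + 1) ^ 2)) : ℝ) : ℂ)) ∧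
    (∫ t : ℝ, (((1 + t ^ 2) ^ s : ℝ) : ℂ) * Ghat K₁ ((t : ℂ) + ω * Complex.I) *
        (starRingEnd ℂ) (Ghat K₂ ((t : ℂ) + ω * Complex.I)))
      = (((K₁ * K₂) ^ (1 + ω) : ℝ) : ℂ) *
          ∫ t : ℝ, Complex.exp (-(Complex.I * t * ((Real.log K₁ - Real.log K₂ : ℝ) : ℂ))) *
            (((1 + t ^ 2) ^ s / ((t ^ 2 + ω ^ 2) * (t ^ 2 + (ω + 1) ^ 2)) : ℝ) : ℂ) := by
  have hξ (t : ℝ) : 0 < ((t : ℂ) + ω * Complex.I).im := by simpa using hω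
  have hweight : Integrable (fun t : ℝ =>
      Complex.exp (-(Complex.I * t * ((Real.log K₁ - Real.log K₂ : ℝ) : ℂ))) *
        (((1 + t ^ 2) ^ s / ((t ^ 2 + ω ^ 2) * (t ^ 2 + (ω + 1) ^ 2)) : ℝ) : ℂ)) :=
    (integrable_one_add_sq_rpow_div hω.ne' (by positivity) hs).ofReal.bdd_mul (c := 1)
      (by fun_prop) (.of_forall fun t => by simp [Complex.norm_exp])
  have hpointwise (t : ℝ) : (((1 + t ^ 2) ^ s : ℝ) : ℂ) * Ghat K₁ ((t : ℂ) + ω * Complex.I) *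
        (starRingEnd ℂ) (Ghat K₂ ((t : ℂ) + ω * Complex.I))
      = (((K₁ * K₂) ^ (1 + ω) : ℝ) : ℂ) *
          (Complex.exp (-(Complex.I * t * ((Real.log K₁ - Real.log K₂ : ℝ) : ℂ))) *
            (((1 + t ^ 2) ^ s / ((t ^ 2 + ω ^ 2) * (t ^ 2 + (ω + 1) ^ 2)) : ℝ) : ℂ)) := by
    rw [hGhat, hGhat, mul_assoc, fourier_put_mul_conj hK₁ hK₂ hω]
    push_cast
    ring
  refine ⟨fun t => integrable_fourier_put hK₁ (hξ t), fun t => integrable_fourier_put hK₂ (hξ t),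
    ?_, hweight, ?_⟩
  · simpa only [hpointwise] using hweight.const_mul _
  · simp_rw [hpointwise, integral_const_mul]
end

section
/- Let ω ∈ ℝ, C > 0, s > 1, and let g : ℝ → ℂ be continuous with |g(t)| ≤ C·(1 + |t|)^{−s} for all t ∈ ℝ. Fix h ∈ ℝ and ξ ∈ ℂ with Im ξ < ω. Then ∫_h^∞ e^{−i·x·ξ} · ((1/(2π))·∫_ℝ e^{i·x·(t + iω)}·g(t) dt) dx = (1/(2πi))·∫_ℝ e^{i·h·(t + iω − ξ)} · g(t)/(ξ − t − iω) dt, where all integrals converge absolutely. (Lemma 5.1(a): formula (fPimax) for the operator Π⁺_h = F∘1_{(h,∞)}∘F^{−1} acting on a function f whose restriction to the line Im η = ω is g, expressed as a contour integral along the line Im η = ω lying above ξ.) -/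
open MeasureTheory Set

/-!
Writing `φ(t) = i (t + iω - ξ)`, the `x`-integrand is `(2π)⁻¹ ∫ e^{φ(t) x} g(t) dt`, and
`Re φ = Im ξ - ω < 0`. Hence `|e^{φ(t) x} g(t)| = e^{(Im ξ - ω) x} |g(t)|` is integrable on
`(h, ∞) × ℝ`, Fubini applies, and the inner `x`-integral is `∫_h^∞ e^{φ x} dx = -e^{φ h} / φ`.
Since `ξ - t - iω = i φ(t)`, this is the claimed formula.
-/

open Complex

section LaplaceTransformOfSuperposition

variable {g φ : ℝ → ℂ} {c : ℝ}

lemma norm_cexp_mul_ofReal (hre : ∀ t, (φ t).re = c) (t x : ℝ) :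
    ‖cexp (φ t * x)‖ = Real.exp (c * x) := by
  simp [norm_exp, hre]

lemma integrable_cexp_mul_mul (hg : Integrable g) (hφ : Measurable φ) (hre : ∀ t, (φ t).re = c)
    (x : ℝ) : Integrable (fun t => cexp (φ t * x) * g t) :=
  hg.bdd_mul (by fun_prop) (.of_forall fun t => (norm_cexp_mul_ofReal hre t x).le)

lemma integrable_prod_cexp_mul_mul (hg : Integrable g) (hφ : Measurable φ)
    (hre : ∀ t, (φ t).re = c) (hc : c < 0) (h : ℝ) :
    Integrable (fun p : ℝ × ℝ => cexp (φ p.2 * p.1) * g p.2)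
      ((volume.restrict (Ioi h)).prod volume) := by
  refine ((integrableOn_exp_mul_Ioi hc h).mul_prod hg.norm).mono' ?_ (.of_forall fun p => ?_)
  · exact (by fun_prop : Measurable fun p : ℝ × ℝ => cexp (φ p.2 * p.1)).aestronglyMeasurable.mul
      hg.aestronglyMeasurable.comp_snd
  · rw [norm_mul, norm_cexp_mul_ofReal hre]

lemma integral_Ioi_cexp_mul_mul (hre : ∀ t, (φ t).re = c) (hc : c < 0) (h t : ℝ) :
    ∫ x in Ioi h, cexp (φ t * x) * g t = -(cexp (φ t * h) / φ t * g t) := by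
  rw [integral_mul_const, integral_exp_mul_complex_Ioi (by rwa [hre]), neg_div, neg_mul]

lemma integrableOn_Ioi_integral_cexp_mul_mul (hg : Integrable g) (hφ : Measurable φ)
    (hre : ∀ t, (φ t).re = c) (hc : c < 0) (h : ℝ) :
    IntegrableOn (fun x : ℝ => ∫ t, cexp (φ t * x) * g t) (Ioi h) :=
  (integrable_prod_cexp_mul_mul hg hφ hre hc h).integral_prod_left

lemma integrable_cexp_mul_div_mul (hg : Integrable g) (hφ : Measurable φ)
    (hre : ∀ t, (φ t).re = c) (hc : c < 0) (h : ℝ) :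
    Integrable (fun t => cexp (φ t * h) / φ t * g t) := by
  have := (integrable_prod_cexp_mul_mul hg hφ hre hc h).integral_prod_right
  simpa only [integral_Ioi_cexp_mul_mul hre hc, neg_neg] using this.fun_neg

lemma integral_Ioi_integral_cexp_mul_mul (hg : Integrable g) (hφ : Measurable φ)
    (hre : ∀ t, (φ t).re = c) (hc : c < 0) (h : ℝ) :
    ∫ x in Ioi h, ∫ t, cexp (φ t * x) * g t = -∫ t, cexp (φ t * h) / φ t * g t := by
  rw [integral_integral_swap (integrable_prod_cexp_mul_mul hg hφ hre hc h), ← integral_neg]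
  simp only [integral_Ioi_cexp_mul_mul hre hc]

end LaplaceTransformOfSuperposition

lemma integrable_of_norm_le_one_add_abs_rpow {E : Type*} [NormedAddCommGroup E] {g : ℝ → E}
    {C s : ℝ} (hg : AEStronglyMeasurable g) (hs : 1 < s)
    (hbound : ∀ t, ‖g t‖ ≤ C * (1 + |t|) ^ (-s)) : Integrable g :=
  ((integrable_one_add_norm (by simpa using hs)).const_mul C).mono' hg (.of_forall hbound)

theorem stmt_11_general (ω C s : ℝ) (hs : 1 < s) (g : ℝ → ℂ)
    (hg : Continuous g) (hbound : ∀ t : ℝ, ‖g t‖ ≤ C * (1 + |t|) ^ (-s))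
    (h : ℝ) (ξ : ℂ) (hξ : ξ.im < ω) :
    (∀ x : ℝ, Integrable (fun t : ℝ =>
        Complex.exp (Complex.I * x * ((t : ℂ) + ω * Complex.I)) * g t)) ∧
    IntegrableOn (fun x : ℝ =>
        Complex.exp (-(Complex.I * x * ξ)) *
          ((2 * (Real.pi : ℂ))⁻¹ *
            ∫ t : ℝ, Complex.exp (Complex.I * x * ((t : ℂ) + ω * Complex.I)) * g t))
      (Ioi h) ∧
    Integrable (fun t : ℝ =>
        Complex.exp (Complex.I * h * ((t : ℂ) + ω * Complex.I - ξ)) * g t /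
          (ξ - t - ω * Complex.I)) ∧
    (∫ x in Ioi h, Complex.exp (-(Complex.I * x * ξ)) *
        ((2 * (Real.pi : ℂ))⁻¹ *
          ∫ t : ℝ, Complex.exp (Complex.I * x * ((t : ℂ) + ω * Complex.I)) * g t))
      = (2 * (Real.pi : ℂ) * Complex.I)⁻¹ *
          ∫ t : ℝ, Complex.exp (Complex.I * h * ((t : ℂ) + ω * Complex.I - ξ)) * g t /
            (ξ - t - ω * Complex.I) := by
  have hgi := integrable_of_norm_le_one_add_abs_rpow hg.aestronglyMeasurable hs hbound
  set φ : ℝ → ℂ := fun t => I * (t + ω * I - ξ) with hφ_def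
  have hφ : Measurable φ := by fun_prop
  have hre : ∀ t, (φ t).re = ξ.im - ω := fun t => by simp [φ]
  have hc : ξ.im - ω < 0 := by linarith
  have hφ0 : ∀ t, φ t ≠ 0 := fun t h0 => hc.ne (by simpa [h0] using (hre t).symm)
  have houter : ∀ x : ℝ, cexp (-(I * x * ξ)) *
      ((2 * (Real.pi : ℂ))⁻¹ * ∫ t : ℝ, cexp (I * x * ((t : ℂ) + ω * I)) * g t) =
      (2 * (Real.pi : ℂ))⁻¹ * ∫ t, cexp (φ t * x) * g t := fun x => by
    rw [mul_left_comm, ← integral_const_mul]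
    congr 2 with t
    rw [← mul_assoc, ← Complex.exp_add, hφ_def]
    ring_nf
  have hresidue : ∀ t : ℝ, cexp (I * h * ((t : ℂ) + ω * I - ξ)) * g t / (ξ - t - ω * I) =
      -I * (cexp (φ t * h) / φ t * g t) := fun t => by
    have hden : ξ - t - ω * I = I * φ t := by
      rw [hφ_def]; linear_combination (ξ - t - ω * I) * I_sq
    rw [hden, hφ_def]
    field_simp
    ring_nf
    rw [I_sq]
    ring
  refine ⟨fun x => ?_, ?_, ?_, ?_⟩
  · have hre' : ∀ t : ℝ, (I * (t + ω * I)).re = -ω := fun t => by simp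
    simpa only [mul_comm, mul_left_comm] using integrable_cexp_mul_mul hgi (by fun_prop) hre' x
  · simp only [houter]
    exact (integrableOn_Ioi_integral_cexp_mul_mul hgi hφ hre hc h).const_mul _
  · simp only [hresidue]
    exact (integrable_cexp_mul_div_mul hgi hφ hre hc h).const_mul _
  · simp only [houter, hresidue, integral_const_mul,
      integral_Ioi_integral_cexp_mul_mul hgi hφ hre hc h]
    generalize ∫ t, cexp (φ t * h) / φ t * g t = K
    field_simp

/-- Lemma 5.1(a), formula (fPimax): the operator `Π⁺_h = F ∘ 1_{(h,∞)} ∘ F⁻¹` applied to a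
function whose restriction to the line `Im η = ω` is `g`, expressed as a contour integral
along the line `Im η = ω` lying above `ξ`. -/
theorem stmt_11 (ω C s : ℝ) (hC : 0 < C) (hs : 1 < s) (g : ℝ → ℂ)
    (hg : Continuous g) (hbound : ∀ t : ℝ, ‖g t‖ ≤ C * (1 + |t|) ^ (-s))
    (h : ℝ) (ξ : ℂ) (hξ : ξ.im < ω) :
    (∀ x : ℝ, Integrable (fun t : ℝ =>
        Complex.exp (Complex.I * x * ((t : ℂ) + ω * Complex.I)) * g t)) ∧
    IntegrableOn (fun x : ℝ =>
        Complex.exp (-(Complex.I * x * ξ)) *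
          ((2 * (Real.pi : ℂ))⁻¹ *
            ∫ t : ℝ, Complex.exp (Complex.I * x * ((t : ℂ) + ω * Complex.I)) * g t))
      (Ioi h) ∧
    Integrable (fun t : ℝ =>
        Complex.exp (Complex.I * h * ((t : ℂ) + ω * Complex.I - ξ)) * g t /
          (ξ - t - ω * Complex.I)) ∧
    (∫ x in Ioi h, Complex.exp (-(Complex.I * x * ξ)) *
        ((2 * (Real.pi : ℂ))⁻¹ *
          ∫ t : ℝ, Complex.exp (Complex.I * x * ((t : ℂ) + ω * Complex.I)) * g t))
      = (2 * (Real.pi : ℂ) * Complex.I)⁻¹ *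
          ∫ t : ℝ, Complex.exp (Complex.I * h * ((t : ℂ) + ω * Complex.I - ξ)) * g t /
            (ξ - t - ω * Complex.I) :=
  stmt_11_general ω C s hs g hg hbound h ξ hξ
end

section
/- Let σ₋ < σ₊ be real numbers and let f be holomorphic on the open strip {z ∈ ℂ : σ₋ < Im z < σ₊} with |f(z)| ≤ C·(1 + |z|)^{−s} on the strip, for some C > 0 and s > 1. Let ω₋, ω₊ ∈ (σ₋, σ₊), h ∈ ℝ, and ξ ∈ ℂ with ω₋ < Im ξ < ω₊. Then (1/(2πi))·∫_ℝ e^{i·h·(t + iω₊ − ξ)} · f(t + iω₊)/(ξ − t − iω₊) dt = f(ξ) + (1/(2πi))·∫_ℝ e^{i·h·(t + iω₋ − ξ)} · f(t + iω₋)/(ξ − t − iω₋) dt. (Lemma 5.1(b): pushing the contour in the representation of Π⁺_h f(ξ) from the line Im η = ω₊ above ξ down to the line Im η = ω₋ below ξ picks up the residue f(ξ) at the simple pole η = ξ.) -/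
/-!
For `R` large the rectangle `[-R, R] × [ω₋, ω₊]` encloses `ξ`, and the counterclockwise boundary
integral of `F η / (η - ξ)`, with `F η = exp (i h (η - ξ)) f η`, equals `2πi F ξ = 2πi f ξ`:
split `F η / (η - ξ) = dslope F ξ η + F ξ / (η - ξ)`; the first summand is holomorphic, so its
boundary integral vanishes, and the second one integrates to `2πi` through branches of the
logarithm. The decay of `f` kills the vertical edges as `R → ∞`, while the horizontal edges
converge to the two line integrals.
-/

open MeasureTheory Set Complex Filter
open scoped Interval Topology Real

/-- Counterclockwise when `x₁ < x₂` and `y₁ < y₂`; the same expression as in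
`integral_boundary_rect_eq_zero_of_differentiableOn`. -/
noncomputable def rectIntegral (g : ℂ → ℂ) (x₁ x₂ y₁ y₂ : ℝ) : ℂ :=
  (∫ x : ℝ in x₁..x₂, g (x + y₁ * I)) - (∫ x : ℝ in x₁..x₂, g (x + y₂ * I)) +
    I • (∫ y : ℝ in y₁..y₂, g (x₂ + y * I)) - I • ∫ y : ℝ in y₁..y₂, g (x₁ + y * I)

def rectBoundary (x₁ x₂ y₁ y₂ : ℝ) : Set ℂ :=
  [[x₁, x₂]] ×ℂ {y₁, y₂} ∪ {x₁, x₂} ×ℂ [[y₁, y₂]]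

section RectIntegral

variable {g g' : ℂ → ℂ} {x₁ x₂ y₁ y₂ : ℝ}

theorem rectIntegral_eq_zero_of_differentiableOn
    (hg : DifferentiableOn ℂ g ([[x₁, x₂]] ×ℂ [[y₁, y₂]])) : rectIntegral g x₁ x₂ y₁ y₂ = 0 := by
  simpa [rectIntegral] using
    integral_boundary_rect_eq_zero_of_differentiableOn g ⟨x₁, y₁⟩ ⟨x₂, y₂⟩ hg

theorem rectIntegral_congr (h : EqOn g g' (rectBoundary x₁ x₂ y₁ y₂)) :
    rectIntegral g x₁ x₂ y₁ y₂ = rectIntegral g' x₁ x₂ y₁ y₂ := by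
  have hor : ∀ y ∈ ({y₁, y₂} : Set ℝ),
      ∫ x : ℝ in x₁..x₂, g (x + y * I) = ∫ x : ℝ in x₁..x₂, g' (x + y * I) := fun y hy ↦
    intervalIntegral.integral_congr fun x hx ↦ h (.inl ⟨by simpa using hx, by simpa using hy⟩)
  have ver : ∀ x ∈ ({x₁, x₂} : Set ℝ),
      ∫ y : ℝ in y₁..y₂, g (x + y * I) = ∫ y : ℝ in y₁..y₂, g' (x + y * I) := fun x hx ↦
    intervalIntegral.integral_congr fun y hy ↦ h (.inr ⟨by simpa using hx, by simpa using hy⟩)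
  simp only [rectIntegral, hor y₁ (by simp), hor y₂ (by simp), ver x₁ (by simp), ver x₂ (by simp)]

theorem rectIntegral_add (hg : ContinuousOn g (rectBoundary x₁ x₂ y₁ y₂))
    (hg' : ContinuousOn g' (rectBoundary x₁ x₂ y₁ y₂)) :
    rectIntegral (g + g') x₁ x₂ y₁ y₂ =
      rectIntegral g x₁ x₂ y₁ y₂ + rectIntegral g' x₁ x₂ y₁ y₂ := by
  have hor : ∀ {φ : ℂ → ℂ}, ContinuousOn φ (rectBoundary x₁ x₂ y₁ y₂) →
      ∀ y ∈ ({y₁, y₂} : Set ℝ), IntervalIntegrable (fun x : ℝ ↦ φ (x + y * I)) volume x₁ x₂ :=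
    fun hφ y hy ↦ (hφ.comp (by fun_prop) fun x hx ↦
      .inl ⟨by simpa using hx, by simpa using hy⟩).intervalIntegrable
  have ver : ∀ {φ : ℂ → ℂ}, ContinuousOn φ (rectBoundary x₁ x₂ y₁ y₂) →
      ∀ x ∈ ({x₁, x₂} : Set ℝ), IntervalIntegrable (fun y : ℝ ↦ φ (x + y * I)) volume y₁ y₂ :=
    fun hφ x hx ↦ (hφ.comp (by fun_prop) fun y hy ↦
      .inr ⟨by simpa using hx, by simpa using hy⟩).intervalIntegrable
  simp only [rectIntegral, Pi.add_apply,
    intervalIntegral.integral_add (hor hg y₁ (by simp)) (hor hg' y₁ (by simp)),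
    intervalIntegral.integral_add (hor hg y₂ (by simp)) (hor hg' y₂ (by simp)),
    intervalIntegral.integral_add (ver hg x₁ (by simp)) (ver hg' x₁ (by simp)),
    intervalIntegral.integral_add (ver hg x₂ (by simp)) (ver hg' x₂ (by simp)), smul_add]
  abel

theorem rectIntegral_const_mul (c : ℂ) :
    rectIntegral (fun z ↦ c * g z) x₁ x₂ y₁ y₂ = c * rectIntegral g x₁ x₂ y₁ y₂ := by
  simp only [rectIntegral, intervalIntegral.integral_const_mul, smul_eq_mul]
  ring

end RectIntegral

theorem integral_div_sub_eq_log_sub {γ : ℝ → ℂ} {v c ξ : ℂ} {a b : ℝ}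
    (hγ : ∀ t, HasDerivAt γ v t) (hslit : ∀ t, c * (γ t - ξ) ∈ slitPlane) :
    ∫ t : ℝ in a..b, v / (γ t - ξ) = log (c * (γ b - ξ)) - log (c * (γ a - ξ)) := by
  have hne : ∀ t, c * (γ t - ξ) ≠ 0 := fun t ↦ slitPlane_ne_zero (hslit t)
  have hcont : Continuous γ := continuous_iff_continuousAt.2 fun t ↦ (hγ t).continuousAt
  refine intervalIntegral.integral_eq_sub_of_hasDerivAt (f := fun t ↦ log (c * (γ t - ξ)))
    (fun t _ ↦ ?_) ?_
  · simpa only [mul_div_mul_left _ _ (left_ne_zero_of_mul (hne t))] using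
      (((hγ t).sub_const ξ).const_mul c).clog_real (hslit t)
  · exact (continuousOn_const.div (hcont.sub continuous_const).continuousOn
      fun t _ ↦ right_ne_zero_of_mul (hne t)).intervalIntegrable


theorem log_sub_log_neg_of_im_pos {z : ℂ} (hz : 0 < z.im) : log z - log (-z) = π * I := by
  apply Complex.ext <;> simp [log_re, log_im, arg_neg_eq_arg_sub_pi_of_im_pos hz]

theorem log_neg_sub_log_of_im_neg {z : ℂ} (hz : z.im < 0) : log (-z) - log z = π * I := by
  apply Complex.ext <;> simp [log_re, log_im, arg_neg_eq_arg_add_pi_of_im_neg hz]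

theorem rectIntegral_inv_sub {x₁ x₂ y₁ y₂ : ℝ} {ξ : ℂ} (hx : ξ.re ∈ Ioo x₁ x₂)
    (hy : ξ.im ∈ Ioo y₁ y₂) :
    rectIntegral (fun z ↦ (z - ξ)⁻¹) x₁ x₂ y₁ y₂ = 2 * π * I := by
  have hor : ∀ y : ℝ, y ≠ ξ.im → ∫ x : ℝ in x₁..x₂, ((x : ℂ) + y * I - ξ)⁻¹ =
      log (x₂ + y * I - ξ) - log (x₁ + y * I - ξ) := fun y hy ↦ by
    simpa using integral_div_sub_eq_log_sub (a := x₁) (b := x₂) (v := 1) (c := 1) (ξ := ξ)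
      (fun t ↦ (hasDerivAt_id t).ofReal_comp.add_const (y * I))
      fun t ↦ mem_slitPlane_iff.2 (.inr (by simpa [sub_eq_zero] using hy))
  have ver : ∀ (x : ℝ) (c : ℂ), (∀ y : ℝ, 0 < (c * (x + y * I - ξ)).re) →
      I • ∫ y : ℝ in y₁..y₂, ((x : ℂ) + y * I - ξ)⁻¹ =
        log (c * (x + y₂ * I - ξ)) - log (c * (x + y₁ * I - ξ)) := fun x c hc ↦ by
    rw [smul_eq_mul, ← intervalIntegral.integral_const_mul]
    simpa [div_eq_mul_inv] using integral_div_sub_eq_log_sub (a := y₁) (b := y₂) (v := I)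
      (c := c) (ξ := ξ)
      (fun t ↦ by simpa using ((hasDerivAt_id t).ofReal_comp.mul_const I).const_add (x : ℂ))
      fun t ↦ mem_slitPlane_iff.2 (.inl (hc t))
  rw [rectIntegral, hor y₁ hy.1.ne, hor y₂ hy.2.ne', ver x₂ 1 (fun y ↦ by simpa using hx.2),
    ver x₁ (-1) (fun y ↦ by simpa using hx.1), one_mul, one_mul, neg_one_mul, neg_one_mul]
  -- the logarithm jumps by `π i` across its branch cut, once on each horizontal edge
  have top := log_sub_log_neg_of_im_pos (z := x₁ + y₂ * I - ξ) (by simpa using hy.2)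
  have bot := log_neg_sub_log_of_im_neg (z := x₁ + y₁ * I - ξ) (by simpa using hy.1)
  linear_combination top + bot

theorem rectIntegral_div_sub {F : ℂ → ℂ} {x₁ x₂ y₁ y₂ : ℝ} {ξ : ℂ}
    (hF : DifferentiableOn ℂ F ([[x₁, x₂]] ×ℂ [[y₁, y₂]])) (hx : ξ.re ∈ Ioo x₁ x₂)
    (hy : ξ.im ∈ Ioo y₁ y₂) :
    rectIntegral (fun z ↦ F z / (z - ξ)) x₁ x₂ y₁ y₂ = 2 * π * I * F ξ := by
  have hξ : ξ ∉ rectBoundary x₁ x₂ y₁ y₂ := by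
    simp only [rectBoundary, mem_union, mem_reProdIm, mem_insert_iff, mem_singleton_iff]
    rintro (⟨-, h | h⟩ | ⟨h | h, -⟩) <;> simp [h] at hx hy
  have hends : ∀ a b : ℝ, {a, b} ⊆ [[a, b]] := fun a b ↦
    insert_subset_iff.2 ⟨left_mem_uIcc, singleton_subset_iff.2 right_mem_uIcc⟩
  have hbdry : rectBoundary x₁ x₂ y₁ y₂ ⊆ [[x₁, x₂]] ×ℂ [[y₁, y₂]] :=
    union_subset (inter_subset_inter_right _ (preimage_mono (hends _ _)))
      (inter_subset_inter_left _ (preimage_mono (hends _ _)))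
  have hnhds : [[x₁, x₂]] ×ℂ [[y₁, y₂]] ∈ 𝓝 ξ :=
    mem_of_superset ((isOpen_Ioo.reProdIm isOpen_Ioo).mem_nhds ⟨hx, hy⟩) fun z hz ↦
      ⟨Ioo_subset_Icc_self.trans Icc_subset_uIcc hz.1,
        Ioo_subset_Icc_self.trans Icc_subset_uIcc hz.2⟩
  have hdslope := (differentiableOn_dslope hnhds).2 hF
  have hsplit : EqOn (fun z ↦ F z / (z - ξ)) (dslope F ξ + fun z ↦ F ξ * (z - ξ)⁻¹)
      (rectBoundary x₁ x₂ y₁ y₂) := fun z hz ↦ by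
    have hz : z ≠ ξ := ne_of_mem_of_not_mem hz hξ
    simp only [Pi.add_apply, dslope_of_ne _ hz, slope_def_field]
    field_simp [sub_ne_zero.2 hz]
    ring
  have hinv : ContinuousOn (fun z ↦ F ξ * (z - ξ)⁻¹) (rectBoundary x₁ x₂ y₁ y₂) :=
    continuousOn_const.mul <| (continuousOn_id.sub continuousOn_const).inv₀ fun z hz ↦
      sub_ne_zero.2 (ne_of_mem_of_not_mem hz hξ)
  rw [rectIntegral_congr hsplit, rectIntegral_add (hdslope.continuousOn.mono hbdry) hinv,
    rectIntegral_eq_zero_of_differentiableOn hdslope,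
    rectIntegral_const_mul (g := fun z ↦ (z - ξ)⁻¹), rectIntegral_inv_sub hx hy]
  ring

theorem tendsto_intervalIntegral_cocompact_zero {G : ℝ → ℝ → ℂ} {B : ℝ → ℝ} {a b : ℝ}
    (hB : Tendsto B atTop (𝓝 0)) (hG : ∀ᶠ x in cocompact ℝ, ∀ y ∈ Ι a b, ‖G x y‖ ≤ B ‖x‖) :
    Tendsto (fun x ↦ ∫ y in a..b, G x y) (cocompact ℝ) (𝓝 0) :=
  squeeze_zero_norm' (hG.mono fun _ hx ↦ intervalIntegral.norm_integral_le_of_norm_le_const hx)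
    (by simpa using (hB.comp (tendsto_norm_cocompact_atTop (E := ℝ))).mul_const |b - a|)

theorem tendsto_rectIntegral {g : ℂ → ℂ} {y₁ y₂ : ℝ}
    (h₁ : Integrable fun x : ℝ ↦ g (x + y₁ * I)) (h₂ : Integrable fun x : ℝ ↦ g (x + y₂ * I))
    (hvert : Tendsto (fun x : ℝ ↦ ∫ y : ℝ in y₁..y₂, g (x + y * I)) (cocompact ℝ) (𝓝 0)) :
    Tendsto (fun R ↦ rectIntegral g (-R) R y₁ y₂) atTop
      (𝓝 ((∫ x : ℝ, g (x + y₁ * I)) - ∫ x : ℝ, g (x + y₂ * I))) := by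
  have horiz := fun {y : ℝ} (hy : Integrable fun x : ℝ ↦ g (x + y * I)) ↦
    intervalIntegral_tendsto_integral hy tendsto_neg_atTop_atBot tendsto_id
  have hright := hvert.comp (tendsto_id.mono_right atTop_le_cocompact)
  have hleft := hvert.comp (tendsto_neg_atTop_atBot.mono_right atBot_le_cocompact)
  simpa [rectIntegral, Function.comp_def] using
    (((horiz h₁).sub (horiz h₂)).add (hright.const_smul I)).sub (hleft.const_smul I)

theorem integrable_div_sub_of_norm_le {F : ℂ → ℂ} {ξ : ℂ} {y K s : ℝ} (hs : 1 < s)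
    (hy : y ≠ ξ.im) (hF : Continuous fun t : ℝ ↦ F (t + y * I))
    (hFK : ∀ t : ℝ, ‖F (t + y * I)‖ ≤ K * (1 + |t|) ^ (-s)) :
    Integrable fun t : ℝ ↦ F (t + y * I) / (t + y * I - ξ) := by
  have hd : 0 < |y - ξ.im| := abs_pos.2 (sub_ne_zero.2 hy)
  have hden : ∀ t : ℝ, |y - ξ.im| ≤ ‖(t : ℂ) + y * I - ξ‖ := fun t ↦ by
    simpa using abs_im_le_norm ((t : ℂ) + y * I - ξ)
  have hne : ∀ t : ℝ, (t : ℂ) + y * I - ξ ≠ 0 := fun t h ↦ by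
    simpa [h] using hd.trans_le (hden t)
  refine ((integrable_one_add_norm (E := ℝ) (by simpa using hs)).const_mul (K / |y - ξ.im|)).mono'
    (hF.div (by fun_prop) hne).aestronglyMeasurable (.of_forall fun t ↦ ?_)
  calc ‖F (t + y * I) / (t + y * I - ξ)‖ ≤ K * (1 + |t|) ^ (-s) / |y - ξ.im| := by
        rw [norm_div]
        exact div_le_div₀ ((norm_nonneg _).trans (hFK t)) (hFK t) hd (hden t)
    _ = K / |y - ξ.im| * (1 + ‖t‖) ^ (-s) := by rw [Real.norm_eq_abs]; ring

theorem integral_div_sub_sub_integral_div_sub {F : ℂ → ℂ} {y₁ y₂ K s : ℝ} {ξ : ℂ} (hs : 1 < s)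
    (hF : DifferentiableOn ℂ F (im ⁻¹' Icc y₁ y₂))
    (hFK : ∀ z : ℂ, z.im ∈ Icc y₁ y₂ → ‖F z‖ ≤ K * (1 + |z.re|) ^ (-s))
    (hξ : ξ.im ∈ Ioo y₁ y₂) :
    (∫ t : ℝ, F (t + y₁ * I) / (t + y₁ * I - ξ)) - ∫ t : ℝ, F (t + y₂ * I) / (t + y₂ * I - ξ) =
      2 * π * I * F ξ := by
  have hline : ∀ y ∈ Icc y₁ y₂, y ≠ ξ.im → Integrable fun t : ℝ ↦ F (t + y * I) / (t + y * I - ξ) :=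
    fun y hy hyξ ↦ integrable_div_sub_of_norm_le hs hyξ
      (hF.continuousOn.comp_continuous (by fun_prop) fun t ↦ by simpa using hy)
      fun t ↦ by simpa using hFK (t + y * I) (by simpa using hy)
  have hy₁₂ : y₁ ≤ y₂ := (hξ.1.trans hξ.2).le
  have hside : ∀ x : ℝ, |ξ.re| + 1 ≤ ‖x‖ → ∀ y ∈ Ι y₁ y₂,
      ‖F (x + y * I) / (x + y * I - ξ)‖ ≤ K * (1 + ‖x‖) ^ (-s) := by
    intro x hx y hy
    rw [uIoc_of_le hy₁₂] at hy
    have h1 : 1 ≤ ‖(x : ℂ) + y * I - ξ‖ := calc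
      1 ≤ |x| - |ξ.re| := by rw [← Real.norm_eq_abs]; linarith
      _ ≤ |x - ξ.re| := abs_sub_abs_le_abs_sub _ _
      _ ≤ ‖(x : ℂ) + y * I - ξ‖ := by simpa using abs_re_le_norm ((x : ℂ) + y * I - ξ)
    rw [norm_div]
    refine (div_le_self (norm_nonneg _) h1).trans ?_
    simpa using hFK (x + y * I) (by simpa using Ioc_subset_Icc_self hy)
  have hB : Tendsto (fun R : ℝ ↦ K * (1 + R) ^ (-s)) atTop (𝓝 0) := by
    simpa using ((tendsto_rpow_neg_atTop (by linarith)).comp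
      (tendsto_atTop_add_const_left _ 1 tendsto_id)).const_mul K
  have hlim := tendsto_rectIntegral (g := fun z ↦ F z / (z - ξ))
    (hline y₁ (left_mem_Icc.2 hy₁₂) hξ.1.ne) (hline y₂ (right_mem_Icc.2 hy₁₂) hξ.2.ne')
    (tendsto_intervalIntegral_cocompact_zero hB <|
      ((tendsto_norm_cocompact_atTop (E := ℝ)).eventually_ge_atTop _).mono hside)
  refine tendsto_nhds_unique hlim (tendsto_const_nhds.congr' ?_)
  filter_upwards [eventually_gt_atTop |ξ.re|] with R hR
  exact (rectIntegral_div_sub (hF.mono fun z hz ↦ by simpa [uIcc_of_le hy₁₂] using hz.2)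
    (abs_lt.1 hR) hξ).symm

theorem norm_cexp_I_mul_sub_le {z ξ : ℂ} {h y₁ y₂ : ℝ} (hz : z.im ∈ Icc y₁ y₂)
    (hξ : ξ.im ∈ Icc y₁ y₂) : ‖exp (I * h * (z - ξ))‖ ≤ Real.exp (|h| * (y₂ - y₁)) := by
  rw [norm_exp, Real.exp_le_exp]
  calc (I * h * (z - ξ)).re = -(h * (z.im - ξ.im)) := by simp
    _ ≤ |h| * |z.im - ξ.im| := by rw [← abs_mul]; exact neg_le_abs _
    _ ≤ |h| * (y₂ - y₁) := by
        gcongr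
        exact abs_sub_le_of_le_of_le hz.1 hz.2 hξ.1 hξ.2

theorem stmt_12_general (σm σp : ℝ) (f : ℂ → ℂ) (C s : ℝ) (hC : 0 < C) (hs : 1 < s)
    (hf : DifferentiableOn ℂ f {z : ℂ | σm < z.im ∧ z.im < σp})
    (hbound : ∀ z : ℂ, σm < z.im → z.im < σp →
      ‖f z‖ ≤ C * (1 + ‖z‖) ^ (-s))
    (ωm ωp : ℝ) (hωm : ωm ∈ Ioo σm σp) (hωp : ωp ∈ Ioo σm σp)
    (h : ℝ) (ξ : ℂ) (hξ₁ : ωm < ξ.im) (hξ₂ : ξ.im < ωp) :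
    (2 * (Real.pi : ℂ) * Complex.I)⁻¹ *
        (∫ t : ℝ, Complex.exp (Complex.I * h * ((t : ℂ) + ωp * Complex.I - ξ)) *
          f ((t : ℂ) + ωp * Complex.I) / (ξ - t - ωp * Complex.I))
      = f ξ + (2 * (Real.pi : ℂ) * Complex.I)⁻¹ *
          ∫ t : ℝ, Complex.exp (Complex.I * h * ((t : ℂ) + ωm * Complex.I - ξ)) *
            f ((t : ℂ) + ωm * Complex.I) / (ξ - t - ωm * Complex.I) := by
  set F : ℂ → ℂ := fun z ↦ exp (I * h * (z - ξ)) * f z with hF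
  have hstrip : im ⁻¹' Icc ωm ωp ⊆ {z : ℂ | σm < z.im ∧ z.im < σp} := fun z hz ↦
    ⟨hωm.1.trans_le hz.1, hz.2.trans_lt hωp.2⟩
  have hFK : ∀ z : ℂ, z.im ∈ Icc ωm ωp →
      ‖F z‖ ≤ Real.exp (|h| * (ωp - ωm)) * C * (1 + |z.re|) ^ (-s) := fun z hz ↦ by
    have hfz : ‖f z‖ ≤ C * (1 + |z.re|) ^ (-s) :=
      (hbound z (hstrip hz).1 (hstrip hz).2).trans <| mul_le_mul_of_nonneg_left
        (Real.rpow_le_rpow_of_nonpos (by positivity) (by linarith [abs_re_le_norm z])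
          (by linarith)) hC.le
    rw [hF, norm_mul, mul_assoc (Real.exp _)]
    exact mul_le_mul (norm_cexp_I_mul_sub_le hz ⟨hξ₁.le, hξ₂.le⟩) hfz (norm_nonneg _)
      (Real.exp_pos _).le
  have hFd : DifferentiableOn ℂ F (im ⁻¹' Icc ωm ωp) :=
    (by fun_prop : Differentiable ℂ fun z ↦ exp (I * h * (z - ξ))).differentiableOn.mul
      (hf.mono hstrip)
  have key := integral_div_sub_sub_integral_div_sub hs hFd hFK ⟨hξ₁, hξ₂⟩
  have hFξ : F ξ = f ξ := by simp [hF]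
  rw [hFξ] at key
  have hline : ∀ ω : ℝ, (∫ t : ℝ, exp (I * h * (t + ω * I - ξ)) * f (t + ω * I) /
      (ξ - t - ω * I)) = -∫ t : ℝ, F (t + ω * I) / (t + ω * I - ξ) := fun ω ↦ by
    rw [← integral_neg]
    congr 1 with t
    rw [← div_neg, neg_sub, sub_sub]
  rw [hline, hline, inv_mul_eq_iff_eq_mul₀ two_pi_I_ne_zero, mul_add,
    mul_inv_cancel_left₀ two_pi_I_ne_zero, ← key]
  ring

/-- Lemma 5.1(b), formula (fPimin): pushing the contour in the representation of `Π⁺_h f(ξ)`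
from the line `Im η = ω₊` above `ξ` down to the line `Im η = ω₋` below `ξ` picks up the
residue `f(ξ)` at the simple pole `η = ξ`. -/
theorem stmt_12 (σm σp : ℝ) (hσ : σm < σp) (f : ℂ → ℂ) (C s : ℝ) (hC : 0 < C) (hs : 1 < s)
    (hf : DifferentiableOn ℂ f {z : ℂ | σm < z.im ∧ z.im < σp})
    (hbound : ∀ z : ℂ, σm < z.im → z.im < σp →
      ‖f z‖ ≤ C * (1 + ‖z‖) ^ (-s))
    (ωm ωp : ℝ) (hωm : ωm ∈ Ioo σm σp) (hωp : ωp ∈ Ioo σm σp)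
    (h : ℝ) (ξ : ℂ) (hξ₁ : ωm < ξ.im) (hξ₂ : ξ.im < ωp) :
    (2 * (Real.pi : ℂ) * Complex.I)⁻¹ *
        (∫ t : ℝ, Complex.exp (Complex.I * h * ((t : ℂ) + ωp * Complex.I - ξ)) *
          f ((t : ℂ) + ωp * Complex.I) / (ξ - t - ωp * Complex.I))
      = f ξ + (2 * (Real.pi : ℂ) * Complex.I)⁻¹ *
          ∫ t : ℝ, Complex.exp (Complex.I * h * ((t : ℂ) + ωm * Complex.I - ξ)) *
            f ((t : ℂ) + ωm * Complex.I) / (ξ - t - ωm * Complex.I) :=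
  stmt_12_general σm σp f C s hC hs hf hbound ωm ωp hωm hωp h ξ hξ₁ hξ₂
end

section
/- Let ω ∈ ℝ, C > 0, s > 1, h ∈ ℝ, and let g : ℝ → ℂ be continuous with |g(t)| ≤ C·(1 + |t|)^{−s} for all t ∈ ℝ. Then the function ξ ↦ (1/(2πi))·∫_ℝ e^{i·h·(t + iω − ξ)} · g(t)/(ξ − t − iω) dt is holomorphic (complex differentiable) at every point of the open half-plane {ξ ∈ ℂ : Im ξ < ω}. (Part of Lemma 5.1: the function Π⁺_h f, represented by the contour integral along the line Im η = ω, is analytic in the half-plane below that line.) -/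
/-!
Factoring out `exp (-i h z)`, the integral becomes the Cauchy transform `∫ φ t / (z - t - i ω) dt`
of the integrable density `φ t = exp (i h (t + i ω)) g t`. A Cauchy transform of an integrable
density is holomorphic off the curve: on a ball at distance `ε` from the curve the derivative
`-φ / (z - ·)²` is dominated by `4 ‖φ‖ / ε²`, so one may differentiate under the integral sign.
-/

open MeasureTheory

theorem half_le_norm_sub_of_mem_ball {E : Type*} [SeminormedAddCommGroup E] {z₀ z w : E}
    {ε : ℝ} (hw : ε ≤ ‖z₀ - w‖) (hz : z ∈ Metric.ball z₀ (ε / 2)) : ε / 2 ≤ ‖z - w‖ := by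
  rw [Metric.mem_ball, dist_eq_norm] at hz
  have := norm_sub_le_norm_sub_add_norm_sub z₀ z w
  rw [norm_sub_rev z₀ z] at this
  linarith

theorem differentiableAt_integral_div_sub {α : Type*} [MeasurableSpace α] {μ : Measure α}
    {φ γ : α → ℂ} (hφ : Integrable φ μ) (hγ : AEStronglyMeasurable γ μ) {z₀ : ℂ} {ε : ℝ}
    (hε : 0 < ε) (hsep : ∀ᵐ a ∂μ, ε ≤ ‖z₀ - γ a‖) :
    DifferentiableAt ℂ (fun z => ∫ a, φ a / (z - γ a) ∂μ) z₀ := by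
  have hball : Metric.ball z₀ (ε / 2) ∈ nhds z₀ := Metric.ball_mem_nhds z₀ (half_pos hε)
  have hmeas : ∀ z, AEStronglyMeasurable (fun a => φ a / (z - γ a)) μ := fun z =>
    (hφ.aemeasurable.div (hγ.aemeasurable.const_sub z)).aestronglyMeasurable
  have hint : Integrable (fun a => φ a / (z₀ - γ a)) μ := by
    refine (hφ.norm.div_const ε).mono' (hmeas z₀) ?_
    filter_upwards [hsep] with a ha
    rw [norm_div]
    exact div_le_div_of_nonneg_left (norm_nonneg _) hε ha
  have hderiv_bound : ∀ᵐ a ∂μ, ∀ z ∈ Metric.ball z₀ (ε / 2),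
      ‖-φ a / (z - γ a) ^ 2‖ ≤ ‖φ a‖ / (ε / 2) ^ 2 := by
    filter_upwards [hsep] with a ha z hz
    rw [norm_div, norm_neg, norm_pow]
    gcongr
    exact half_le_norm_sub_of_mem_ball ha hz
  have hderiv : ∀ᵐ a ∂μ, ∀ z ∈ Metric.ball z₀ (ε / 2),
      HasDerivAt (fun z => φ a / (z - γ a)) (-φ a / (z - γ a) ^ 2) z := by
    filter_upwards [hsep] with a ha z hz
    have hne : z - γ a ≠ 0 :=
      norm_pos_iff.1 ((half_pos hε).trans_le (half_le_norm_sub_of_mem_ball ha hz))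
    simpa [div_eq_mul_inv, neg_div] using
      (((hasDerivAt_id z).sub_const (γ a)).inv hne).const_mul (φ a)
  have hmeas' : AEStronglyMeasurable (fun a => -φ a / (z₀ - γ a) ^ 2) μ :=
    (hφ.aemeasurable.neg.div ((hγ.aemeasurable.const_sub z₀).pow_const 2)).aestronglyMeasurable
  exact (hasDerivAt_integral_of_dominated_loc_of_deriv_le hball
    (Filter.Eventually.of_forall hmeas) hint hmeas' hderiv_bound
    (hφ.norm.div_const _) hderiv).2.differentiableAt

theorem integrable_of_norm_le_mul_one_add_abs_rpow_neg {E : Type*} [NormedAddCommGroup E]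
    {f : ℝ → E} (hf : AEStronglyMeasurable f) {C s : ℝ} (hs : 1 < s)
    (hbound : ∀ t, ‖f t‖ ≤ C * (1 + |t|) ^ (-s)) : Integrable f := by
  have hdecay : Integrable (fun t : ℝ => (1 + |t|) ^ (-s)) := by
    simpa using integrable_one_add_norm (E := ℝ) (μ := volume) (r := s) (by simpa using hs)
  exact (hdecay.const_mul C).mono' hf (Filter.Eventually.of_forall hbound)

open Complex

theorem stmt_14_general (ω C s h : ℝ) (hs : 1 < s) (g : ℝ → ℂ)
    (hg : Continuous g) (hbound : ∀ t : ℝ, ‖g t‖ ≤ C * (1 + |t|) ^ (-s)) :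
    ∀ ξ : ℂ, ξ.im < ω →
      DifferentiableAt ℂ (fun z : ℂ =>
        (2 * (Real.pi : ℂ) * Complex.I)⁻¹ *
          ∫ t : ℝ, Complex.exp (Complex.I * h * ((t : ℂ) + ω * Complex.I - z)) * g t /
            (z - t - ω * Complex.I)) ξ := by
  intro ξ hξ
  set c : ℝ → ℂ := fun t => t + ω * I
  have hg_int : Integrable g := integrable_of_norm_le_mul_one_add_abs_rpow_neg
    hg.aestronglyMeasurable hs hbound
  have hφ : Integrable (fun t => exp (I * h * c t) * g t) :=
    hg_int.bdd_mul (c := Real.exp (-(h * ω))) (by fun_prop)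
      (Filter.Eventually.of_forall fun t => by simp [c, norm_exp, mul_add])
  have hsep : ∀ t, ω - ξ.im ≤ ‖ξ - c t‖ := fun t => by
    simpa [c] using (neg_le_abs _).trans (abs_im_le_norm (ξ - c t))
  have hcauchy := differentiableAt_integral_div_sub hφ (by fun_prop) (sub_pos.2 hξ)
    (Filter.Eventually.of_forall hsep)
  have hfactor : ∀ z, ∫ t : ℝ, exp (I * h * (t + ω * I - z)) * g t / (z - t - ω * I)
      = exp (-(I * h * z)) * ∫ t, exp (I * h * c t) * g t / (z - c t) := fun z => by
    rw [← integral_const_mul]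
    congr 1 with t
    rw [show I * h * (t + ω * I - z) = I * h * c t + -(I * h * z) by ring, exp_add, sub_sub]
    ring
  simp_rw [hfactor]
  exact (((differentiableAt_id.const_mul _).neg.cexp).mul hcauchy).const_mul _

/-- Part of Lemma 5.1: the function `Π⁺_h f`, represented by the contour integral along the line
`Im η = ω`, is analytic in the half-plane below that line. -/
theorem stmt_14 (ω C s h : ℝ) (hC : 0 < C) (hs : 1 < s) (g : ℝ → ℂ)
    (hg : Continuous g) (hbound : ∀ t : ℝ, ‖g t‖ ≤ C * (1 + |t|) ^ (-s)) :
    ∀ ξ : ℂ, ξ.im < ω →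
      DifferentiableAt ℂ (fun z : ℂ =>
        (2 * (Real.pi : ℂ) * Complex.I)⁻¹ *
          ∫ t : ℝ, Complex.exp (Complex.I * h * ((t : ℂ) + ω * Complex.I - z)) * g t /
            (z - t - ω * Complex.I)) ξ :=
  stmt_14_general ω C s h hs g hg hbound
end

section
/- Let t ≥ 0 and r, β, ω', x, h ∈ ℝ. Let G : ℝ → ℝ be measurable, and let Ψ be a complex-valued function defined on the two horizontal lines {Im ξ = ω'} and {Im ξ = −ω' − β}, satisfying the symmetry Ψ(−ξ − iβ) = Ψ(ξ) for every ξ with Im ξ = −ω' − β (note that −ξ − iβ then lies on the line Im = ω'). Assume the function (u, y) ↦ e^{i·x·(u + iω') − (r + Ψ(u + iω'))·t} · e^{−i·y·(u + iω')} · e^{β·(y − x)} · G(2x − y) · 1_{(h,∞)}(2x − y) is Lebesgue integrable on ℝ × ℝ. Then (1/(2π))·∫_ℝ e^{i·x·(u + iω') − (r + Ψ(u + iω'))·t} · ( ∫_ℝ e^{−i·y·(u + iω')} · e^{β·(y − x)} · G(2x − y) · 1_{(h,∞)}(2x − y) dy ) du = (1/(2π))·∫_ℝ e^{i·x·(v +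 i(−ω' − β)) − (r + Ψ(v + i(−ω' − β)))·t} · ( ∫_h^∞ e^{−i·y·(v + i(−ω' − β))} · G(y) dy ) dv. (Appendix A: the Fourier identity underlying the semi-static hedging condition, showing that the reflected, exponentially tilted payoff and the payoff G·1_{(h,∞)} produce equal option values precisely when the characteristic exponent satisfies the generalized symmetry Ψ(ξ) = Ψ(−ξ − iβ).) -/
open MeasureTheory Set

/-- Appendix A: the Fourier identity underlying the semi-static hedging condition, showing that
the reflected, exponentially tilted payoff and the payoff `G·1_{(h,∞)}` produce equal option
values precisely when the characteristic exponent satisfies the generalized symmetry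
`Ψ(ξ) = Ψ(-ξ - iβ)`. -/
theorem stmt_16 (t : ℝ) (ht : 0 ≤ t) (r β ω' x h : ℝ)
    (G : ℝ → ℝ) (hG : Measurable G)
    (Ψ : ℂ → ℂ)
    (hsym : ∀ ξ : ℂ, ξ.im = -ω' - β → Ψ (-ξ - Complex.I * β) = Ψ ξ)
    (hint : Integrable (fun p : ℝ × ℝ =>
      Complex.exp (Complex.I * x * ((p.1 : ℂ) + ω' * Complex.I)
          - ((r : ℂ) + Ψ ((p.1 : ℂ) + ω' * Complex.I)) * t) *
        (Complex.exp (-(Complex.I * p.2 * ((p.1 : ℂ) + ω' * Complex.I))) *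
          (Real.exp (β * (p.2 - x)) : ℂ) * (G (2 * x - p.2) : ℂ) *
          (if h < 2 * x - p.2 then (1 : ℂ) else 0)))) :
    (2 * (Real.pi : ℂ))⁻¹ *
        (∫ u : ℝ, Complex.exp (Complex.I * x * ((u : ℂ) + ω' * Complex.I)
              - ((r : ℂ) + Ψ ((u : ℂ) + ω' * Complex.I)) * t) *
          ∫ y : ℝ, Complex.exp (-(Complex.I * y * ((u : ℂ) + ω' * Complex.I))) *
            (Real.exp (β * (y - x)) : ℂ) * (G (2 * x - y) : ℂ) *
            (if h < 2 * x - y then (1 : ℂ) else 0))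
      = (2 * (Real.pi : ℂ))⁻¹ *
          ∫ v : ℝ, Complex.exp (Complex.I * x * ((v : ℂ) + ((-ω' - β : ℝ) : ℂ) * Complex.I)
                - ((r : ℂ) + Ψ ((v : ℂ) + ((-ω' - β : ℝ) : ℂ) * Complex.I)) * t) *
            ∫ y in Ioi h,
              Complex.exp (-(Complex.I * y * ((v : ℂ) + ((-ω' - β : ℝ) : ℂ) * Complex.I))) *
                (G y : ℂ) := by
  congr 1
  -- rewrite the RHS via v ↦ -v
  rw [← MeasureTheory.integral_neg_eq_self (fun v : ℝ =>
    Complex.exp (Complex.I * x * ((v : ℂ) + ((-ω' - β : ℝ) : ℂ) * Complex.I)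
        - ((r : ℂ) + Ψ ((v : ℂ) + ((-ω' - β : ℝ) : ℂ) * Complex.I)) * t) *
      ∫ y in Ioi h,
        Complex.exp (-(Complex.I * y * ((v : ℂ) + ((-ω' - β : ℝ) : ℂ) * Complex.I))) *
          (G y : ℂ)) volume]
  congr 1
  ext u
  set ξ : ℂ := (u : ℂ) + ω' * Complex.I with hξ
  set η : ℂ := -ξ - Complex.I * β with hη
  have hηeq : (((-u : ℝ) : ℂ) + ((-ω' - β : ℝ) : ℂ) * Complex.I) = η := by
    rw [hη, hξ]; push_cast; ring
  have hηim : η.im = -ω' - β := by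
    rw [hη, hξ]; simp
  have hΨ : Ψ ξ = Ψ η := by
    have := hsym η hηim
    rw [← this]
    congr 1
    rw [hη]; ring
  -- transform the inner integral
  have hinner :
      (∫ y : ℝ, Complex.exp (-(Complex.I * y * ξ)) *
          (Real.exp (β * (y - x)) : ℂ) * (G (2 * x - y) : ℂ) *
          (if h < 2 * x - y then (1 : ℂ) else 0))
        = Complex.exp (-(2 * Complex.I * x * ξ) + β * x) *
          ∫ z in Ioi h, Complex.exp (-(Complex.I * z * η)) * (G z : ℂ) := by
    have step1 :
        (∫ y : ℝ, Complex.exp (-(Complex.I * y * ξ)) *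
            (Real.exp (β * (y - x)) : ℂ) * (G (2 * x - y) : ℂ) *
            (if h < 2 * x - y then (1 : ℂ) else 0))
          = ∫ z : ℝ, Complex.exp (-(Complex.I * ((2 * x - z : ℝ) : ℂ) * ξ)) *
              (Real.exp (β * (x - z)) : ℂ) * (G z : ℂ) *
              (if h < z then (1 : ℂ) else 0) := by
      rw [← MeasureTheory.integral_sub_left_eq_self (fun z : ℝ =>
        Complex.exp (-(Complex.I * ((2 * x - z : ℝ) : ℂ) * ξ)) *
          (Real.exp (β * (x - z)) : ℂ) * (G z : ℂ) *
          (if h < z then (1 : ℂ) else 0)) volume (2 * x)]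
      congr 1
      ext y
      have h1 : 2 * x - (2 * x - y) = y := by ring
      have h2 : x - (2 * x - y) = y - x := by ring
      simp only [h1, h2]
    rw [step1]
    have step2 :
        (∫ z : ℝ, Complex.exp (-(Complex.I * ((2 * x - z : ℝ) : ℂ) * ξ)) *
            (Real.exp (β * (x - z)) : ℂ) * (G z : ℂ) *
            (if h < z then (1 : ℂ) else 0))
          = ∫ z : ℝ, (Ioi h).indicator (fun z : ℝ =>
              Complex.exp (-(2 * Complex.I * x * ξ) + β * x) *
                (Complex.exp (-(Complex.I * z * η)) * (G z : ℂ))) z := by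
      congr 1
      ext z
      rw [Set.indicator_apply]
      simp only [mem_Ioi]
      by_cases hz : h < z
      · simp only [hz, if_pos, mul_one]
        rw [← mul_assoc]
        congr 1
        rw [Complex.ofReal_exp, ← Complex.exp_add, ← Complex.exp_add]
        congr 1
        rw [hη, hξ]
        push_cast
        linear_combination (-(z : ℂ) * β) * Complex.I_sq
      · simp only [hz, if_neg, not_false_iff, mul_zero]
    rw [step2, integral_indicator measurableSet_Ioi, MeasureTheory.integral_const_mul]
  rw [hinner, hηeq, ← mul_assoc, ← Complex.exp_add, hΨ]
  congr 2
  rw [hη]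
  linear_combination ((x : ℂ) * β) * Complex.I_mul_I
end

section
/- Let ν ∈ (0, 2) with ν ≠ 1, c > 0, and λ₋ < 0 < λ₊. Define, for ξ ∈ ℂ with λ₋ < Im ξ < λ₊: ψ(ξ) = c·Γ(−ν)·( λ₊^ν − (λ₊ + iξ)^ν + (−λ₋)^ν − (−λ₋ − iξ)^ν ), where complex powers are principal powers (well-defined since Re(λ₊ + iξ) = λ₊ − Im ξ > 0 and Re(−λ₋ − iξ) = Im ξ − λ₋ > 0 on this strip), and Γ is the Gamma function. Set β = −λ₊ − λ₋. Then for every ξ with λ₋ < Im ξ < λ₊, the point −ξ − iβ also satisfies λ₋ < Im(−ξ − iβ) < λ₊, and ψ(−ξ − iβ) = ψ(ξ). (Appendix A: the characteristic exponent of a driftless KoBoL/CGMY process satisfies the generalized symmetry condition with β = −λ₊ − λ₋, which is the condition permitting the formal semi-static hedge of barrier options.) -/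
open Set

/-- Appendix A: the characteristic exponent of a driftless KoBoL/CGMY process satisfies the
generalized symmetry condition `ψ(-ξ - iβ) = ψ(ξ)` with `β = -lamP - lamM`, which is the
condition permitting the formal semi-static hedge of barrier options.  Here `lamM < 0 < lamP`
are the steepness parameters and complex powers are principal powers. -/
theorem stmt_18 (ν c lamM lamP : ℝ) (hν : ν ∈ Ioo (0 : ℝ) 2) (hν1 : ν ≠ 1)
    (hc : 0 < c) (hlamM : lamM < 0) (hlamP : 0 < lamP)
    (ψ : ℂ → ℂ)
    (hψ : ∀ ξ : ℂ, lamM < ξ.im → ξ.im < lamP →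
      ψ ξ = (c : ℂ) * Complex.Gamma (-(ν : ℂ)) *
        ((lamP : ℂ) ^ (ν : ℂ) - ((lamP : ℂ) + Complex.I * ξ) ^ (ν : ℂ)
          + ((-lamM : ℝ) : ℂ) ^ (ν : ℂ) - (-(lamM : ℂ) - Complex.I * ξ) ^ (ν : ℂ))) :
    ∀ ξ : ℂ, lamM < ξ.im → ξ.im < lamP →
      (lamM < (-ξ - Complex.I * ((-lamP - lamM : ℝ) : ℂ)).im ∧
        (-ξ - Complex.I * ((-lamP - lamM : ℝ) : ℂ)).im < lamP) ∧
      ψ (-ξ - Complex.I * ((-lamP - lamM : ℝ) : ℂ)) = ψ ξ := by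
  intro ξ h1 h2
  set ξ' : ℂ := -ξ - Complex.I * ((-lamP - lamM : ℝ) : ℂ) with hξ'
  have him : ξ'.im = lamP + lamM - ξ.im := by
    simp [hξ', Complex.sub_im, Complex.neg_im, Complex.mul_im, Complex.I_re,
      Complex.I_im, Complex.ofReal_re, Complex.ofReal_im]
    ring
  have hb1 : lamM < ξ'.im := by rw [him]; linarith
  have hb2 : ξ'.im < lamP := by rw [him]; linarith
  refine ⟨⟨hb1, hb2⟩, ?_⟩
  rw [hψ ξ' hb1 hb2, hψ ξ h1 h2]
  have e1 : (lamP : ℂ) + Complex.I * ξ' = -(lamM : ℂ) - Complex.I * ξ := by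
    rw [hξ']
    push_cast
    have : Complex.I * Complex.I = -1 := Complex.I_mul_I
    ring_nf
    rw [Complex.I_sq]
    ring
  have e2 : -(lamM : ℂ) - Complex.I * ξ' = (lamP : ℂ) + Complex.I * ξ := by
    rw [hξ']
    push_cast
    ring_nf
    rw [Complex.I_sq]
    ring
  rw [e1, e2]
  ring
end
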